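/- arXiv:2512.10442 — 12 statements merged into one kernel-verified Lean document; each statement's English description precedes it below -/
import Mathlib

section
/- Let X and Y be Banach spaces and S : X → Y a bounded linear operator that is range strongly exposing with witness x₀ ∈ S_X, i.e. ‖Sx₀‖ = ‖S‖ and every sequence (xₙ) ⊆ B_X with ‖Sxₙ‖ → ‖S‖ has a subsequence with Sx_{σ(n)} → λ Sx₀ for some unimodular scalar λ. If z ∈ X satisfies ‖x₀ + z‖ ≤ 1 and ‖x₀ - z‖ ≤ 1, then Sz = 0. -/
open Filter Topology

section Defs

variable (𝕜 : Type*) [RCLike 𝕜]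

/-- `f` strongly exposes `x₀` in the closed unit ball: `x₀` lies in the ball, the real part of
`f` attains its maximum over the ball at `x₀`, and every maximizing sequence in the ball
converges in norm to `x₀`. -/
def StronglyExposes {X : Type*} [NormedAddCommGroup X] [NormedSpace 𝕜 X]
    (f : X →L[𝕜] 𝕜) (x₀ : X) : Prop :=
  ‖x₀‖ ≤ 1 ∧ (∀ x : X, ‖x‖ ≤ 1 → RCLike.re (f x) ≤ RCLike.re (f x₀)) ∧
    ∀ u : ℕ → X, (∀ n, ‖u n‖ ≤ 1) →
      Tendsto (fun n => RCLike.re (f (u n))) atTop (𝓝 (RCLike.re (f x₀))) →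
      Tendsto u atTop (𝓝 x₀)

/-- `x₀` is a strongly exposed point of the closed unit ball. -/
def StronglyExposedPoint {X : Type*} [NormedAddCommGroup X] [NormedSpace 𝕜 X]
    (x₀ : X) : Prop :=
  ∃ f : X →L[𝕜] 𝕜, f ≠ 0 ∧ StronglyExposes 𝕜 f x₀

variable {X Y : Type*} [NormedAddCommGroup X] [NormedSpace 𝕜 X]
  [NormedAddCommGroup Y] [NormedSpace 𝕜 Y]

/-- `S` is range strongly exposing with witness `x₀`. -/
def RSEAt (S : X →L[𝕜] Y) (x₀ : X) : Prop :=
  ‖x₀‖ = 1 ∧ ‖S x₀‖ = ‖S‖ ∧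
    ∀ u : ℕ → X, (∀ n, ‖u n‖ ≤ 1) →
      Tendsto (fun n => ‖S (u n)‖) atTop (𝓝 ‖S‖) →
      ∃ (σ : ℕ → ℕ) (l : 𝕜), StrictMono σ ∧ ‖l‖ = 1 ∧
        Tendsto (fun n => S (u (σ n))) atTop (𝓝 (l • S x₀))

/-- `S` is a range strongly exposing operator. -/
def RSE (S : X →L[𝕜] Y) : Prop := ∃ x₀ : X, RSEAt 𝕜 S x₀

/-- `S` is absolutely strongly exposing with witness `x₀`. -/
def ASEAt (S : X →L[𝕜] Y) (x₀ : X) : Prop :=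
  ‖x₀‖ = 1 ∧
    ∀ u : ℕ → X, (∀ n, ‖u n‖ ≤ 1) →
      Tendsto (fun n => ‖S (u n)‖) atTop (𝓝 ‖S‖) →
      ∃ (σ : ℕ → ℕ) (l : 𝕜), StrictMono σ ∧ ‖l‖ = 1 ∧
        Tendsto (fun n => u (σ n)) atTop (𝓝 (l • x₀))

/-- `S` is an absolutely strongly exposing operator. -/
def ASE (S : X →L[𝕜] Y) : Prop := ∃ x₀ : X, ASEAt 𝕜 S x₀

variable (X Y)

/-- The pair `(X, Y)` has the Bishop–Phelps–Bollobás property. -/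
def BPBp : Prop :=
  ∀ ε > (0:ℝ), ∃ η : ℝ, 0 < η ∧ η < ε ∧
    ∀ T : X →L[𝕜] Y, ‖T‖ = 1 → ∀ x : X, ‖x‖ = 1 → 1 - η < ‖T x‖ →
      ∃ (S : X →L[𝕜] Y) (x₀ : X), ‖x₀‖ = 1 ∧ ‖S‖ = 1 ∧ ‖S x₀‖ = 1 ∧
        ‖S - T‖ < ε ∧ ‖x - x₀‖ < ε

/-- The pair `(X, Y)` has the Bishop–Phelps–Bollobás property for range strongly
exposing operators. -/
def BPBpRSE : Prop :=
  ∀ ε > (0:ℝ), ∃ η : ℝ, 0 < η ∧ η < ε ∧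
    ∀ T : X →L[𝕜] Y, ‖T‖ = 1 → ∀ x : X, ‖x‖ = 1 → 1 - η < ‖T x‖ →
      ∃ (S : X →L[𝕜] Y) (x₀ : X), RSE 𝕜 S ∧ ‖x₀‖ = 1 ∧ ‖S‖ = 1 ∧ ‖S x₀‖ = 1 ∧
        ‖S - T‖ < ε ∧ ‖x - x₀‖ < ε

/-- The pair `(X, Y)` has the Bishop–Phelps–Bollobás property for absolutely strongly
exposing operators. -/
def BPBpASE : Prop :=
  ∀ ε > (0:ℝ), ∃ η : ℝ, 0 < η ∧ η < ε ∧
    ∀ T : X →L[𝕜] Y, ‖T‖ = 1 → ∀ x : X, ‖x‖ = 1 → 1 - η < ‖T x‖ →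
      ∃ (S : X →L[𝕜] Y) (x₀ : X), ASE 𝕜 S ∧ ‖x₀‖ = 1 ∧ ‖S‖ = 1 ∧ ‖S x₀‖ = 1 ∧
        ‖S - T‖ < ε ∧ ‖x - x₀‖ < ε

/-- The pair `(X, Y)` has the BPBp-RSE with a prescribed function `η`. -/
def BPBpRSEWith (η : ℝ → ℝ) : Prop :=
  ∀ ε ∈ Set.Ioo (0:ℝ) 1,
    ∀ T : X →L[𝕜] Y, ‖T‖ = 1 → ∀ x : X, ‖x‖ = 1 → 1 - η ε < ‖T x‖ →
      ∃ (S : X →L[𝕜] Y) (x₀ : X), RSE 𝕜 S ∧ ‖x₀‖ = 1 ∧ ‖S‖ = 1 ∧ ‖S x₀‖ = 1 ∧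
        ‖S - T‖ < ε ∧ ‖x - x₀‖ < ε

end Defs

/-- `Y` is a ℂ-uniformly convex complex normed space. -/
def CUniformConvex (Y : Type*) [NormedAddCommGroup Y] [NormedSpace ℂ Y] : Prop :=
  ∀ ε > (0:ℝ), ∃ δ > (0:ℝ), ∀ y₀ y₁ : Y,
    (∀ w : ℂ, ‖w‖ = 1 → ‖y₀ + w • y₁‖ ≤ 1) → ε < ‖y₁‖ → ‖y₀‖ < 1 - δ

/- `x₀` is the midpoint of `x₀ ± z`, both in the unit ball, so `S(x₀ ± z)` are two
vectors of norm at most `‖S‖` averaging to `S x₀`, which has norm `‖S‖`; hence both attain the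
norm. Testing the RSE property on constant sequences gives `S(x₀ ± z) = λ± S x₀` with `|λ±| = 1`
and `λ₊ + λ₋ = 2`, which forces `λ₊ = 1`, i.e. `S z = 0`. -/

lemma norm_eq_of_norm_le_of_two_mul_le_norm_add {E : Type*} [SeminormedAddCommGroup E]
    {a b : E} {r : ℝ} (ha : ‖a‖ ≤ r) (hb : ‖b‖ ≤ r) (hab : 2 * r ≤ ‖a + b‖) : ‖a‖ = r :=
  le_antisymm ha (by linarith [norm_add_le a b])

lemma RCLike.eq_one_of_norm_le_one_of_add_eq_two {𝕜 : Type*} [RCLike 𝕜] {a b : 𝕜}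
    (ha : ‖a‖ ≤ 1) (hb : ‖b‖ ≤ 1) (hab : a + b = 2) : a = 1 := by
  have hre : RCLike.re a + RCLike.re b = 2 := by simpa using congrArg RCLike.re hab
  have hre_a : RCLike.re a = 1 := by
    linarith [RCLike.re_le_norm a, RCLike.re_le_norm b]
  rw [← RCLike.re_eq_self_of_le (a := a) (hre_a ▸ ha), hre_a, RCLike.ofReal_one]

section RSEAt

variable {𝕜 X Y : Type*} [RCLike 𝕜] [NormedAddCommGroup X] [NormedSpace 𝕜 X]
  [NormedAddCommGroup Y] [NormedSpace 𝕜 Y] {S : X →L[𝕜] Y} {x₀ : X}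

lemma RSEAt.exists_apply_eq_smul (h : RSEAt 𝕜 S x₀) {v : X} (hv : ‖v‖ ≤ 1)
    (hSv : ‖S v‖ = ‖S‖) : ∃ l : 𝕜, ‖l‖ = 1 ∧ S v = l • S x₀ := by
  obtain ⟨-, l, -, hl, hlim⟩ := h.2.2 (fun _ => v) (fun _ => hv) (hSv ▸ tendsto_const_nhds)
  exact ⟨l, hl, tendsto_nhds_unique tendsto_const_nhds hlim⟩

lemma RSEAt.apply_add_eq_of_norm_add_le_one_of_norm_sub_le_one (h : RSEAt 𝕜 S x₀) {z : X}
    (hS : S x₀ ≠ 0) (h1 : ‖x₀ + z‖ ≤ 1) (h2 : ‖x₀ - z‖ ≤ 1) : S (x₀ + z) = S x₀ := by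
  have hmid : S (x₀ + z) + S (x₀ - z) = (2 : 𝕜) • S x₀ := by
    rw [map_add, map_sub, two_smul]; abel
  have hsum : 2 * ‖S‖ ≤ ‖S (x₀ + z) + S (x₀ - z)‖ := by
    rw [hmid, norm_smul, h.2.1, RCLike.norm_ofNat]
  have hle1 := S.unit_le_opNorm _ h1
  have hle2 := S.unit_le_opNorm _ h2
  obtain ⟨l₁, hl₁, heq₁⟩ := h.exists_apply_eq_smul h1
    (norm_eq_of_norm_le_of_two_mul_le_norm_add hle1 hle2 hsum)
  obtain ⟨l₂, hl₂, heq₂⟩ := h.exists_apply_eq_smul h2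
    (norm_eq_of_norm_le_of_two_mul_le_norm_add hle2 hle1 (add_comm (S (x₀ + z)) _ ▸ hsum))
  have hl : l₁ + l₂ = 2 := smul_left_injective 𝕜 hS <|
    show (l₁ + l₂) • S x₀ = (2 : 𝕜) • S x₀ by rw [add_smul, ← heq₁, ← heq₂, hmid]
  rw [heq₁, RCLike.eq_one_of_norm_le_one_of_add_eq_two hl₁.le hl₂.le hl, one_smul]

end RSEAt

theorem stmt_2_general {𝕜 X Y : Type*} [RCLike 𝕜] [NormedAddCommGroup X] [NormedSpace 𝕜 X]
    [NormedAddCommGroup Y] [NormedSpace 𝕜 Y]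
    (S : X →L[𝕜] Y) (x₀ : X) (h : RSEAt 𝕜 S x₀)
    (z : X) (h1 : ‖x₀ + z‖ ≤ 1) (h2 : ‖x₀ - z‖ ≤ 1) : S z = 0 := by
  by_cases hS : S x₀ = 0
  · have hS_zero : S = 0 := norm_eq_zero.mp (by rw [← h.2.1, hS, norm_zero])
    simp [hS_zero]
  · have hadd := h.apply_add_eq_of_norm_add_le_one_of_norm_sub_le_one hS h1 h2
    rwa [map_add, add_eq_left] at hadd

theorem stmt_2 {𝕜 X Y : Type*} [RCLike 𝕜] [NormedAddCommGroup X] [NormedSpace 𝕜 X]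
    [NormedAddCommGroup Y] [NormedSpace 𝕜 Y] [CompleteSpace X] [CompleteSpace Y]
    (S : X →L[𝕜] Y) (x₀ : X) (h : RSEAt 𝕜 S x₀)
    (z : X) (h1 : ‖x₀ + z‖ ≤ 1) (h2 : ‖x₀ - z‖ ≤ 1) : S z = 0 :=
  stmt_2_general S x₀ h z h1 h2
end

section
/- Let X and Y be Banach spaces and T : X → Y an absolutely strongly exposing operator with witness x₀ ∈ S_X satisfying ‖Tx₀‖ = ‖T‖. Then for any y₀* ∈ S_{Y*} with Re y₀*(Tx₀) = ‖T‖, the functional T*y₀* strongly exposes x₀ in B_X. -/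
open Filter Topology

/-!
Since `‖g‖ ≤ 1`, `Re g (T x) ≤ ‖T x‖ ≤ ‖T‖` on the unit ball, so `x₀` maximizes `Re g ∘ T` and
every maximizing sequence `(uₙ)` is norming for `T`. By the ASE property every subsequence of
`(uₙ)` has a further subsequence tending to some `l • x₀` with `‖l‖ = 1`. As `g (T x₀)` is the
real number `‖T‖ > 0`, the limit condition `Re (l ‖T‖) = ‖T‖` forces `l = 1`, so `uₙ → x₀`.
-/

namespace ContinuousLinearMap

variable {𝕜 X Y : Type*} [RCLike 𝕜] [NormedAddCommGroup X] [NormedSpace 𝕜 X]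
  [NormedAddCommGroup Y] [NormedSpace 𝕜 Y] {g : Y →L[𝕜] 𝕜} {T : X →L[𝕜] Y}

theorem re_apply_le_norm (hg : ‖g‖ ≤ 1) (y : Y) : RCLike.re (g y) ≤ ‖y‖ :=
  calc RCLike.re (g y) ≤ ‖g y‖ := RCLike.re_le_norm _
    _ ≤ ‖g‖ * ‖y‖ := g.le_opNorm y
    _ ≤ ‖y‖ := mul_le_of_le_one_left (norm_nonneg y) hg

theorem re_apply_apply_le_opNorm (hg : ‖g‖ ≤ 1) {x : X} (hx : ‖x‖ ≤ 1) :
    RCLike.re (g (T x)) ≤ ‖T‖ :=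
  (re_apply_le_norm hg _).trans (T.unit_le_opNorm _ hx)

theorem tendsto_norm_apply_of_tendsto_re {u : ℕ → X} (hg : ‖g‖ ≤ 1) (hu : ∀ n, ‖u n‖ ≤ 1)
    (h : Tendsto (fun n => RCLike.re (g (T (u n)))) atTop (𝓝 ‖T‖)) :
    Tendsto (fun n => ‖T (u n)‖) atTop (𝓝 ‖T‖) :=
  tendsto_of_tendsto_of_tendsto_of_le_of_le h tendsto_const_nhds
    (fun _ => re_apply_le_norm hg _) (fun n => T.unit_le_opNorm _ (hu n))

end ContinuousLinearMap

open ContinuousLinearMap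

namespace ASEAt

variable {𝕜 X Y : Type*} [RCLike 𝕜] [NormedAddCommGroup X] [NormedSpace 𝕜 X]
  [NormedAddCommGroup Y] [NormedSpace 𝕜 Y] {T : X →L[𝕜] Y} {x₀ : X}

theorem opNorm_pos (hT : ASEAt 𝕜 T x₀) : 0 < ‖T‖ := by
  refine (norm_nonneg T).lt_of_ne fun hT0 => ?_
  obtain ⟨-, l, -, hl, hlim⟩ := hT.2 (fun _ => 0) (fun _ => by simp) (by simp [← hT0])
  have h0 : l • x₀ = 0 := tendsto_nhds_unique hlim tendsto_const_nhds
  have h1 := congrArg norm h0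
  rw [norm_smul, hl, hT.1, norm_zero] at h1
  norm_num at h1

theorem eq_one_of_re_apply_smul_eq (hT : ASEAt 𝕜 T x₀) {g : Y →L[𝕜] 𝕜} (hg : ‖g‖ ≤ 1)
    (hgT : RCLike.re (g (T x₀)) = ‖T‖) {l : 𝕜} (hl : ‖l‖ = 1)
    (hlT : RCLike.re (g (T (l • x₀))) = ‖T‖) : l = 1 := by
  have hle : ‖g (T x₀)‖ ≤ RCLike.re (g (T x₀)) :=
    calc ‖g (T x₀)‖ ≤ ‖g‖ * ‖T x₀‖ := g.le_opNorm _
      _ ≤ ‖T x₀‖ := mul_le_of_le_one_left (norm_nonneg _) hg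
      _ ≤ ‖T‖ := T.unit_le_opNorm _ hT.1.le
      _ = RCLike.re (g (T x₀)) := hgT.symm
  have hgTx₀ : g (T x₀) = (‖T‖ : 𝕜) := by rw [← RCLike.re_eq_self_of_le hle, hgT]
  have hre : RCLike.re l = 1 := by
    rw [map_smul, map_smul, smul_eq_mul, hgTx₀, mul_comm, RCLike.re_ofReal_mul] at hlT
    exact (mul_eq_left₀ hT.opNorm_pos.ne').mp hlT
  simpa [hre] using (RCLike.re_eq_self_of_le (a := l) (by rw [hl, hre])).symm

theorem tendsto_of_tendsto_re {g : Y →L[𝕜] 𝕜} (hT : ASEAt 𝕜 T x₀) (hg : ‖g‖ ≤ 1)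
    (hgT : RCLike.re (g (T x₀)) = ‖T‖) {u : ℕ → X} (hu : ∀ n, ‖u n‖ ≤ 1)
    (h : Tendsto (fun n => RCLike.re (g (T (u n)))) atTop (𝓝 ‖T‖)) :
    Tendsto u atTop (𝓝 x₀) := by
  refine tendsto_of_subseq_tendsto fun ns hns => ?_
  obtain ⟨σ, l, hσ, hl, hlim⟩ := hT.2 (u ∘ ns) (fun n => hu _)
    ((tendsto_norm_apply_of_tendsto_re hg hu h).comp hns)
  have hlT : RCLike.re (g (T (l • x₀))) = ‖T‖ :=
    tendsto_nhds_unique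
      (((RCLike.continuous_re.comp (g.comp T).continuous).tendsto _).comp hlim)
      (h.comp (hns.comp hσ.tendsto_atTop))
  refine ⟨σ, ?_⟩
  simpa [hT.eq_one_of_re_apply_smul_eq hg hgT hl hlT] using hlim

end ASEAt

theorem stmt_3_general {𝕜 X Y : Type*} [RCLike 𝕜] [NormedAddCommGroup X] [NormedSpace 𝕜 X]
    [NormedAddCommGroup Y] [NormedSpace 𝕜 Y]
    (T : X →L[𝕜] Y) (x₀ : X) (hASE : ASEAt 𝕜 T x₀)
    (g : Y →L[𝕜] 𝕜) (hg : ‖g‖ = 1) (hgT : RCLike.re (g (T x₀)) = ‖T‖) :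
    StronglyExposes 𝕜 (g.comp T) x₀ := by
  refine ⟨hASE.1.le, fun x hx => ?_, fun u hu h => ?_⟩
  · simpa [hgT] using re_apply_apply_le_opNorm hg.le hx
  · simp only [comp_apply, hgT] at h
    exact hASE.tendsto_of_tendsto_re hg.le hgT hu h

theorem stmt_3 {𝕜 X Y : Type*} [RCLike 𝕜] [NormedAddCommGroup X] [NormedSpace 𝕜 X]
    [NormedAddCommGroup Y] [NormedSpace 𝕜 Y] [CompleteSpace X] [CompleteSpace Y]
    (T : X →L[𝕜] Y) (x₀ : X) (hASE : ASEAt 𝕜 T x₀) (hTx₀ : ‖T x₀‖ = ‖T‖)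
    (g : Y →L[𝕜] 𝕜) (hg : ‖g‖ = 1) (hgT : RCLike.re (g (T x₀)) = ‖T‖) :
    StronglyExposes 𝕜 (g.comp T) x₀ :=
  stmt_3_general T x₀ hASE g hg hgT
end

section
/- Let X be a uniformly convex Banach space and m ∈ ℕ. A point x in the unit sphere of the ℓ∞-sum of m copies of X is a strongly exposed point of the unit ball if and only if ‖x(i)‖ = 1 for every i = 1, …, m. -/
open Filter Topology

/-!
A strongly exposed point is extreme, and if `‖x i‖ < 1` then `x` is the midpoint of the two
points `x ± d` of the unit ball, where `d` has a single nonzero coordinate of norm `1 - ‖x i‖`.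
Conversely, in a uniformly convex space every point of the unit sphere is strongly exposed by
any of its norming functionals, and a sum of functionals exposing the coordinates exposes the
point of the `ℓ∞`-sum: a maximizing sequence for the sum maximizes every summand.
-/

open scoped ENNReal

lemma tendsto_apply_of_tendsto_sum_of_le {α ι : Type*} [Fintype ι] {l : Filter α}
    {a : α → ι → ℝ} {b : ι → ℝ} (hle : ∀ n i, a n i ≤ b i)
    (hsum : Tendsto (fun n => ∑ i, a n i) l (𝓝 (∑ i, b i))) (i : ι) :
    Tendsto (fun n => a n i) l (𝓝 (b i)) := by
  have hgap : Tendsto (fun n => ∑ j, (b j - a n j)) l (𝓝 0) := by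
    simpa only [Finset.sum_sub_distrib, sub_self] using hsum.const_sub (∑ j, b j)
  have hgap_i : Tendsto (fun n => b i - a n i) l (𝓝 0) :=
    squeeze_zero (fun n => sub_nonneg.2 (hle n i))
      (fun n => Finset.single_le_sum (fun j _ => sub_nonneg.2 (hle n j)) (Finset.mem_univ i))
      hgap
  simpa using hgap_i.const_sub (b i)

section StronglyExposes

variable {𝕜 X : Type*} [RCLike 𝕜] [NormedAddCommGroup X] [NormedSpace 𝕜 X]

lemma StronglyExposes.eq_zero_of_norm_add_le_of_norm_sub_le {f : X →L[𝕜] 𝕜} {x₀ d : X}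
    (hf : StronglyExposes 𝕜 f x₀) (hadd : ‖x₀ + d‖ ≤ 1) (hsub : ‖x₀ - d‖ ≤ 1) : d = 0 := by
  obtain ⟨-, hmax, hseq⟩ := hf
  have hadd_max := hmax _ hadd
  have hsub_max := hmax _ hsub
  simp only [map_add, map_sub] at hadd_max hsub_max
  have hfd : RCLike.re (f (x₀ + d)) = RCLike.re (f x₀) := by
    simp only [map_add]
    linarith
  have : Tendsto (fun _ : ℕ => x₀ + d) atTop (𝓝 x₀) :=
    hseq _ (fun _ => hadd) (by simpa only [hfd] using tendsto_const_nhds)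
  simpa using tendsto_nhds_unique tendsto_const_nhds this

lemma re_apply_le_norm_of_opNorm_le_one {g : X →L[𝕜] 𝕜} (hg : ‖g‖ ≤ 1) (y : X) :
    RCLike.re (g y) ≤ ‖y‖ :=
  calc RCLike.re (g y) ≤ ‖g y‖ := RCLike.re_le_norm _
    _ ≤ ‖g‖ * ‖y‖ := g.le_opNorm y
    _ ≤ ‖y‖ := mul_le_of_le_one_left (norm_nonneg y) hg

variable [UniformConvexSpace X]

lemma UniformConvexSpace.stronglyExposes_of_re_eq_one {g : X →L[𝕜] 𝕜} {a : X}
    (hg : ‖g‖ ≤ 1) (ha : ‖a‖ ≤ 1) (hga : RCLike.re (g a) = 1) : StronglyExposes 𝕜 g a := by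
  let : NormedSpace ℝ X := NormedSpace.restrictScalars ℝ 𝕜 X
  have hre_le := re_apply_le_norm_of_opNorm_le_one hg
  refine ⟨ha, fun y hy => hga ▸ (hre_le y).trans hy, fun u hu hlim => ?_⟩
  rw [Metric.tendsto_atTop]
  intro ε hε
  obtain ⟨δ, hδ, hconvex⟩ := exists_forall_closed_ball_dist_add_le_two_sub X hε
  have hδa : 1 - δ < RCLike.re (g a) := by linarith
  obtain ⟨N, hN⟩ := (hlim.eventually (eventually_gt_nhds hδa)).exists_forall_of_atTop
  refine ⟨N, fun n hn => not_le.1 fun hfar => ?_⟩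
  -- `re g (u n + a) > 2 - δ`, which uniform convexity forbids when `u n` is far from `a`.
  have hmid := hconvex (hu n) ha (by rwa [dist_eq_norm] at hfar)
  have hre_mid := hre_le (u n + a)
  simp only [map_add] at hre_mid
  linarith [hN n hn]

lemma UniformConvexSpace.stronglyExposedPoint_of_norm_eq_one {a : X} (ha : ‖a‖ = 1) :
    StronglyExposedPoint 𝕜 a := by
  obtain ⟨g, hg, hga⟩ := exists_dual_vector 𝕜 a (by simp [ha])
  refine ⟨g, by simp [← norm_ne_zero_iff, hg], stronglyExposes_of_re_eq_one hg.le ha.le ?_⟩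
  simp [hga, ha]

end StronglyExposes

section PiLp

variable {𝕜 ι : Type*} [RCLike 𝕜] [Fintype ι] {β : ι → Type*}
  [∀ i, NormedAddCommGroup (β i)] [∀ i, NormedSpace 𝕜 (β i)]

lemma PiLp.norm_le_iff_of_nonneg {r : ℝ} (hr : 0 ≤ r) (x : PiLp ∞ β) :
    ‖x‖ ≤ r ↔ ∀ i, ‖x i‖ ≤ r := by
  rw [← PiLp.norm_ofLp, pi_norm_le_iff_of_nonneg hr]

lemma PiLp.norm_add_single_le [DecidableEq ι] {x : PiLp ∞ β} {r : ℝ} (hx : ‖x‖ ≤ r) {i : ι}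
    {v : β i} (hv : ‖x i‖ + ‖v‖ ≤ r) : ‖x + PiLp.single ∞ i v‖ ≤ r := by
  rw [PiLp.norm_le_iff_of_nonneg ((norm_nonneg x).trans hx)]
  intro j
  rcases eq_or_ne j i with rfl | hji
  · simpa [PiLp.single_eq_same] using (norm_add_le _ _).trans hv
  · simpa [PiLp.single_eq_of_ne ∞ hji] using (PiLp.norm_apply_le x j).trans hx

lemma StronglyExposes.norm_apply_eq_one_of_piLp [∀ i, Nontrivial (β i)]
    {f : PiLp ∞ β →L[𝕜] 𝕜} {x : PiLp ∞ β} (hf : StronglyExposes 𝕜 f x) (i : ι) :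
    ‖x i‖ = 1 := by
  classical
  have hxi : ‖x i‖ ≤ 1 := (PiLp.norm_apply_le x i).trans hf.1
  refine le_antisymm hxi (not_lt.1 fun hlt => ?_)
  let : NormedSpace ℝ (β i) := NormedSpace.restrictScalars ℝ 𝕜 (β i)
  obtain ⟨v, hv⟩ := exists_norm_eq (β i) (sub_nonneg.2 hxi)
  have hv_le : ‖x i‖ + ‖v‖ ≤ 1 := by linarith
  have hd := hf.eq_zero_of_norm_add_le_of_norm_sub_le (PiLp.norm_add_single_le hf.1 hv_le)
    (by
      rw [sub_eq_add_neg, ← PiLp.single_neg]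
      exact PiLp.norm_add_single_le hf.1 (by rwa [norm_neg]))
  rw [PiLp.single_eq_zero_iff] at hd
  rw [hd, norm_zero] at hv
  linarith

lemma StronglyExposes.piLp {f : ∀ i, β i →L[𝕜] 𝕜} {x : PiLp ∞ β}
    (hf : ∀ i, StronglyExposes 𝕜 (f i) (x i)) :
    StronglyExposes 𝕜 (∑ i, (f i).comp (PiLp.proj ∞ β i)) x := by
  have hre : ∀ y : PiLp ∞ β,
      RCLike.re ((∑ i, (f i).comp (PiLp.proj ∞ β i)) y) = ∑ i, RCLike.re (f i (y i)) := by
    intro y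
    simp [map_sum]
  have hcoord_le : ∀ y : PiLp ∞ β, ‖y‖ ≤ 1 → ∀ i,
      RCLike.re (f i (y i)) ≤ RCLike.re (f i (x i)) :=
    fun y hy i => (hf i).2.1 _ ((PiLp.norm_apply_le y i).trans hy)
  refine ⟨(PiLp.norm_le_iff_of_nonneg zero_le_one x).2 fun i => (hf i).1,
    fun y hy => ?_, fun u hu hlim => ?_⟩
  · simpa only [hre] using Finset.sum_le_sum fun i _ => hcoord_le y hy i
  · simp only [hre] at hlim
    have hconv : ∀ i, Tendsto (fun n => u n i) atTop (𝓝 (x i)) := fun i =>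
      (hf i).2.2 _ (fun n => (PiLp.norm_apply_le (u n) i).trans (hu n))
        (tendsto_apply_of_tendsto_sum_of_le (fun n => hcoord_le (u n) (hu n)) hlim i)
    exact (PiLp.continuous_toLp ∞ β).tendsto _ |>.comp (tendsto_pi_nhds.2 hconv)

lemma StronglyExposedPoint.piLp [Nonempty ι] {x : PiLp ∞ β}
    (hx : ∀ i, StronglyExposedPoint 𝕜 (x i)) : StronglyExposedPoint 𝕜 x := by
  classical
  choose f hf0 hf using hx
  refine ⟨_, ?_, StronglyExposes.piLp hf⟩
  obtain ⟨i⟩ := ‹Nonempty ι›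
  obtain ⟨v, hv⟩ := DFunLike.ne_iff.1 (hf0 i)
  refine DFunLike.ne_iff.2 ⟨PiLp.single ∞ i v, ?_⟩
  rw [FunLike.coe_sum, Finset.sum_apply, Finset.sum_eq_single i]
  · simpa [PiLp.single_eq_same] using hv
  · intro j _ hji
    simp [PiLp.single_eq_of_ne ∞ hji]
  · simp

end PiLp

theorem stmt_4_general {𝕜 X : Type*} [RCLike 𝕜] [NormedAddCommGroup X] [NormedSpace 𝕜 X]
    [UniformConvexSpace X] (m : ℕ)
    (x : PiLp ⊤ (fun _ : Fin m => X)) (hx : ‖x‖ = 1) :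
    StronglyExposedPoint 𝕜 x ↔ ∀ i : Fin m, ‖x i‖ = 1 := by
  obtain ⟨k, hk⟩ : ∃ k, x k ≠ 0 := by
    by_contra! h
    rw [show x = 0 from PiLp.ext h, norm_zero] at hx
    exact zero_ne_one hx
  have : Nontrivial X := ⟨⟨x k, 0, hk⟩⟩
  have : Nonempty (Fin m) := ⟨k⟩
  constructor
  · rintro ⟨f, -, hf⟩
    exact StronglyExposes.norm_apply_eq_one_of_piLp hf
  · exact fun h => StronglyExposedPoint.piLp fun i =>
      UniformConvexSpace.stronglyExposedPoint_of_norm_eq_one (h i)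

theorem stmt_4 {𝕜 X : Type*} [RCLike 𝕜] [NormedAddCommGroup X] [NormedSpace 𝕜 X]
    [CompleteSpace X] [UniformConvexSpace X] (m : ℕ)
    (x : PiLp ⊤ (fun _ : Fin m => X)) (hx : ‖x‖ = 1) :
    StronglyExposedPoint 𝕜 x ↔ ∀ i : Fin m, ‖x i‖ = 1 :=
  stmt_4_general m x hx
end

section
/- A complex Banach space Y that is ℂ-uniformly convex does not contain an isomorphic copy of c₀; consequently every bounded linear operator from c₀ to Y is compact. -/
open Filter Topology

/-! If `Y` is ℂ-uniformly convex, a sequence `y` with `‖y i‖ ≥ c > 0` cannot have all its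
unimodular partial sums `∑ i < m, w i • y i` bounded: since the coefficient of the last term is an
arbitrary unimodular number, the definition shrinks any bound `M` to `(1 - δ) M`, and iterating
contradicts `‖y 0‖ ≥ c`. In `c₀`, unimodular combinations of disjointly supported vectors of norm
at most `1` have norm at most `1`, so a bounded operator `T : c₀ → Y` cannot stay bounded below
on such a sequence. For the unit vectors this excludes an isomorphic copy of `c₀`. If
`‖T ∘ Qₙ‖` did not tend to `0`, where `Qₙ` kills the first `n` coordinates, successive finitely
supported blocks would give such a sequence; hence `T` is the norm limit of the finite-rank
operators `T ∘ (1 - Qₙ)` and is compact. -/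

open Finset Function
open scoped ZeroAtInfty

theorem ContinuousLinearMap.isCompactOperator_of_finiteDimensional_range {𝕜 X Y : Type*}
    [NontriviallyNormedField 𝕜] [ProperSpace 𝕜] [NormedAddCommGroup X] [NormedSpace 𝕜 X]
    [NormedAddCommGroup Y] [NormedSpace 𝕜 Y] (T : X →L[𝕜] Y)
    [FiniteDimensional 𝕜 (LinearMap.range (T : X →ₗ[𝕜] Y))] : IsCompactOperator T := by
  have : ProperSpace (LinearMap.range (T : X →ₗ[𝕜] Y)) := FiniteDimensional.proper 𝕜 _
  exact (isCompactOperator_of_locallyCompactSpace_dom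
    (T.codRestrict _ (LinearMap.mem_range_self (T : X →ₗ[𝕜] Y)))).clm_comp
    (LinearMap.range (T : X →ₗ[𝕜] Y)).subtypeL

lemma exists_seq_pairwise_disjoint_of_forall_exists_subset_Ico {γ : Type*} {p : γ → Prop}
    (supp : γ → Set ℕ) (h : ∀ n, ∃ g, p g ∧ ∃ N, supp g ⊆ Set.Ico n N) :
    ∃ g : ℕ → γ, (∀ i, p (g i)) ∧ Pairwise (Disjoint on fun i => supp (g i)) := by
  choose g hp N hN using h
  let b : ℕ → ℕ := fun k => (fun n => max n (N n))^[k] 0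
  have hb : ∀ k, b (k + 1) = max (b k) (N (b k)) := fun k => iterate_succ_apply' _ _ _
  have hmono : Monotone b := monotone_nat_of_le_succ fun k => (hb k).symm ▸ le_max_left _ _
  have hsub : ∀ k, supp (g (b k)) ⊆ Set.Ico (b k) (b (k + 1)) := fun k =>
    (hN _).trans (Set.Ico_subset_Ico_right ((hb k).symm ▸ le_max_right _ _))
  exact ⟨fun k => g (b k), fun k => hp _,
    hmono.pairwise_disjoint_on_Ico_succ.mono fun i j hij => hij.mono (hsub i) (hsub j)⟩

section UniformConvexity

variable {Y : Type*} [NormedAddCommGroup Y] [NormedSpace ℂ Y]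

def UnimodularSumsLE (y : ℕ → Y) (M : ℝ) : Prop :=
  ∀ (m : ℕ) (w : ℕ → ℂ), (∀ i, ‖w i‖ = 1) → ‖∑ i ∈ range m, w i • y i‖ ≤ M

lemma UnimodularSumsLE.norm_le {y : ℕ → Y} {M : ℝ} (hy : UnimodularSumsLE y M) : ‖y 0‖ ≤ M := by
  simpa using hy 1 1 fun _ => norm_one

lemma CUniformConvex.exists_forall_norm_lt_mul (h : CUniformConvex Y) {ε : ℝ} (hε : 0 < ε) :
    ∃ δ > 0, ∀ M > 0, ∀ y₀ y₁ : Y, (∀ w : ℂ, ‖w‖ = 1 → ‖y₀ + w • y₁‖ ≤ M) →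
      ε * M < ‖y₁‖ → ‖y₀‖ < (1 - δ) * M := by
  obtain ⟨δ, hδ, hδY⟩ := h ε hε
  refine ⟨δ, hδ, fun M hM y₀ y₁ hle hlt => ?_⟩
  have hnorm : ∀ y : Y, ‖M⁻¹ • y‖ = ‖y‖ / M := fun y => by
    rw [norm_smul, Real.norm_of_nonneg (inv_nonneg.2 hM.le), inv_mul_eq_div]
  have key := hδY (M⁻¹ • y₀) (M⁻¹ • y₁) (fun w hw => by
      rw [smul_comm, ← smul_add, hnorm, div_le_one hM]
      exact hle w hw)
    (by rwa [hnorm, lt_div_iff₀ hM])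
  rwa [hnorm, div_lt_iff₀ hM] at key

lemma CUniformConvex.exists_unimodularSumsLE_mul (h : CUniformConvex Y) {ε : ℝ} (hε : 0 < ε) :
    ∃ δ > 0, ∀ M > 0, ∀ y : ℕ → Y, UnimodularSumsLE y M → (∀ i, ε * M < ‖y i‖) →
      UnimodularSumsLE y ((1 - δ) * M) := by
  obtain ⟨δ, hδ, hδY⟩ := h.exists_forall_norm_lt_mul hε
  refine ⟨δ, hδ, fun M hM y hy hεy m w hw => (hδY M hM _ (y m) (fun u hu => ?_) (hεy m)).le⟩
  -- the last coefficient is free: replace it by `u`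
  have := hy (m + 1) (update w m u) fun i => by
    rcases eq_or_ne i m with rfl | hi
    · simpa using hu
    · simpa [hi] using hw i
  rwa [sum_range_succ, update_self, sum_congr rfl fun i hi =>
    by rw [update_of_ne (mem_range.1 hi).ne]] at this

theorem CUniformConvex.not_unimodularSumsLE (h : CUniformConvex Y) {y : ℕ → Y} {c : ℝ}
    (hc : 0 < c) (hy : ∀ i, c ≤ ‖y i‖) (B : ℝ) : ¬ UnimodularSumsLE y B := by
  intro hB
  have hcB : c ≤ B := (hy 0).trans hB.norm_le
  have hB₀ : 0 < B := hc.trans_le hcB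
  obtain ⟨δ, hδ, hstep⟩ := h.exists_unimodularSumsLE_mul (div_pos hc (mul_pos two_pos hB₀))
  have step : ∀ M, 0 < M → M ≤ B → UnimodularSumsLE y M → UnimodularSumsLE y ((1 - δ) * M) :=
    fun M hM hMB hyM => hstep M hM y hyM fun i => by
      calc c / (2 * B) * M ≤ c / (2 * B) * B := by gcongr
        _ < c := by field_simp; linarith
        _ ≤ ‖y i‖ := hy i
  have hδ₁ : 0 < 1 - δ := by
    have := (hy 0).trans (step B hB₀ le_rfl hB).norm_le
    nlinarith
  have iter : ∀ K : ℕ, UnimodularSumsLE y ((1 - δ) ^ K * B) := by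
    intro K
    induction K with
    | zero => simpa using hB
    | succ K ih =>
      rw [pow_succ', mul_assoc]
      exact step _ (by positivity)
        (mul_le_of_le_one_left hB₀.le (pow_le_one₀ hδ₁.le (by linarith))) ih
  obtain ⟨K, hK⟩ := exists_pow_lt_of_lt_one (div_pos hc hB₀) (by linarith : 1 - δ < 1)
  have := (hy 0).trans (iter K).norm_le
  rw [lt_div_iff₀ hB₀] at hK
  linarith

end UniformConvexity

namespace ZeroAtInftyContinuousMap

variable {α E : Type*} [TopologicalSpace α] [NormedAddCommGroup E]

lemma norm_apply_le (f : C₀(α, E)) (x : α) : ‖f x‖ ≤ ‖f‖ := by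
  rw [← norm_toBCF_eq_norm]
  exact f.toBCF.norm_coe_le_norm x

lemma norm_le_of_forall {f : C₀(α, E)} {C : ℝ} (hC : 0 ≤ C) (h : ∀ x, ‖f x‖ ≤ C) : ‖f‖ ≤ C := by
  rw [← norm_toBCF_eq_norm]
  exact (BoundedContinuousFunction.norm_le hC).2 h

lemma sum_apply {ι : Type*} (s : Finset ι) (f : ι → C₀(α, E)) (x : α) :
    (∑ i ∈ s, f i) x = ∑ i ∈ s, f i x :=
  map_sum (⟨⟨fun g : C₀(α, E) => g x, rfl⟩, fun _ _ => rfl⟩ : C₀(α, E) →+ E) f s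

lemma norm_sum_smul_le_one_of_pairwise_disjoint {𝕜 ι : Type*} [NormedField 𝕜] [NormedSpace 𝕜 E]
    (s : Finset ι) {f : ι → C₀(α, E)} (hf : ∀ i, ‖f i‖ ≤ 1)
    (hd : Pairwise (Disjoint on fun i => support (f i))) {w : ι → 𝕜}
    (hw : ∀ i, ‖w i‖ ≤ 1) : ‖∑ i ∈ s, w i • f i‖ ≤ 1 := by
  refine norm_le_of_forall zero_le_one fun x => ?_
  rw [sum_apply]
  by_cases hx : ∃ i ∈ s, f i x ≠ 0
  · obtain ⟨i, hi, hix⟩ := hx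
    rw [sum_eq_single i (fun j _ hji => ?_) (absurd hi)]
    · simpa [norm_smul] using
        mul_le_one₀ (hw i) (norm_nonneg _) ((norm_apply_le _ x).trans (hf i))
    · simp [notMem_support.1 (Set.disjoint_right.1 (hd hji) hix)]
  · push Not at hx
    rw [sum_eq_zero fun i hi => by simp [hx i hi], norm_zero]
    exact zero_le_one

section Discrete

variable [DiscreteTopology α]

lemma tendsto_cofinite (f : C₀(α, E)) : Tendsto f cofinite (𝓝 0) :=
  cocompact_eq_cofinite α ▸ zero_at_infty f

def ofTendstoCofinite (f : α → E) (hf : Tendsto f cofinite (𝓝 0)) : C₀(α, E) :=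
  ⟨⟨f, continuous_of_discreteTopology⟩, cocompact_eq_cofinite α ▸ hf⟩

def single [DecidableEq α] (a : α) (c : E) : C₀(α, E) :=
  ofTendstoCofinite (Pi.single a c) <| tendsto_const_nhds.congr' <| by
    filter_upwards [(Set.finite_singleton a).compl_mem_cofinite] with x hx
    rw [Set.mem_compl_singleton_iff] at hx
    simp [hx]

@[simp] lemma coe_single [DecidableEq α] (a : α) (c : E) : ⇑(single a c) = Pi.single a c := rfl

lemma norm_single [DecidableEq α] (a : α) (c : E) : ‖single a c‖ = ‖c‖ := by
  refine le_antisymm (norm_le_of_forall (norm_nonneg c) fun x => ?_) ?_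
  · rcases eq_or_ne x a with rfl | hx
    · simp
    · simp [hx]
  · simpa using norm_apply_le (single a c) a

lemma support_single_subset [DecidableEq α] (a : α) (c : E) : support (single a c) ⊆ {a} :=
  Pi.support_single_subset

lemma pairwise_disjoint_support_single [DecidableEq α] (c : E) :
    Pairwise (Disjoint on fun a : α => support (single a c)) := fun _ _ hab =>
  (Set.disjoint_singleton.2 hab).mono (support_single_subset _ c) (support_single_subset _ c)

variable (𝕜 : Type*) [NontriviallyNormedField 𝕜] [NormedSpace 𝕜 E]

noncomputable def indicatorCLM (s : Set α) : C₀(α, E) →L[𝕜] C₀(α, E) :=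
  LinearMap.mkContinuous
    { toFun := fun f => ofTendstoCofinite (s.indicator f) <|
        squeeze_zero_norm (fun x => norm_indicator_le_norm_self f x)
          (by simpa using f.tendsto_cofinite.norm)
      map_add' := fun f g => ext fun x => congrFun (Set.indicator_add s f g) x
      map_smul' := fun c f => ext fun x => congrFun (Set.indicator_const_smul s c f) x }
    1 fun f => by
      rw [one_mul]
      exact norm_le_of_forall (norm_nonneg f) fun x =>
        (norm_indicator_le_norm_self f x).trans (norm_apply_le f x)

@[simp] lemma coe_indicatorCLM (s : Set α) (f : C₀(α, E)) :
    ⇑(indicatorCLM 𝕜 s f) = s.indicator f := rfl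

variable {𝕜}

lemma norm_indicatorCLM_apply_le (s : Set α) (f : C₀(α, E)) : ‖indicatorCLM 𝕜 s f‖ ≤ ‖f‖ :=
  norm_le_of_forall (norm_nonneg f) fun x => by
    simpa using (norm_indicator_le_norm_self f x).trans (norm_apply_le f x)

lemma support_indicatorCLM (s : Set α) (f : C₀(α, E)) :
    support (indicatorCLM 𝕜 s f) = s ∩ support f :=
  Set.support_indicator

lemma self_sub_indicatorCLM (s : Set α) (f : C₀(α, E)) :
    f - indicatorCLM 𝕜 s f = indicatorCLM 𝕜 sᶜ f :=
  ext fun x => (congrFun (Set.indicator_compl s f) x).symm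

lemma tendsto_indicatorCLM_atTop (f : C₀(α, E)) :
    Tendsto (fun s : Finset α => indicatorCLM 𝕜 (s : Set α) f) atTop (𝓝 f) := by
  refine Metric.tendsto_nhds.2 fun ε hε => ?_
  -- off the finite set where `‖f‖ ≥ ε / 2`, the function is already `ε / 2`-small
  have hfin := eventually_cofinite.1 (f.tendsto_cofinite.norm.eventually
    (gt_mem_nhds (by simpa using half_pos hε) : ∀ᶠ r in 𝓝 ‖(0 : E)‖, r < ε / 2))
  filter_upwards [eventually_ge_atTop hfin.toFinset] with s hs
  rw [dist_eq_norm', self_sub_indicatorCLM]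
  refine (norm_le_of_forall (half_pos hε).le fun x => ?_).trans_lt (half_lt_self hε)
  by_cases hx : x ∈ (s : Set α)
  · simp [hx, (half_pos hε).le]
  · have hxf : x ∉ hfin.toFinset := fun h => hx (hs h)
    rw [Set.Finite.mem_toFinset, Set.mem_ofPred_eq, not_not] at hxf
    simpa [hx] using hxf.le

lemma indicatorCLM_eq_sum_single [DecidableEq α] (s : Finset α) (f : C₀(α, 𝕜)) :
    indicatorCLM 𝕜 (s : Set α) f = ∑ i ∈ s, f i • single i 1 := by
  ext x
  simp [sum_apply, Pi.single_apply, Set.indicator_apply]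

lemma isCompactOperator_comp_indicatorCLM [ProperSpace 𝕜] {F : Type*} [NormedAddCommGroup F]
    [NormedSpace 𝕜 F] (T : C₀(α, 𝕜) →L[𝕜] F) (s : Finset α) :
    IsCompactOperator (T ∘L indicatorCLM 𝕜 (s : Set α)) := by
  classical
  let V := Submodule.span 𝕜 (Set.range fun i : s => T (single i 1))
  have : FiniteDimensional 𝕜 V := FiniteDimensional.span_of_finite 𝕜 (Set.finite_range _)
  have : FiniteDimensional 𝕜
      (LinearMap.range ((T ∘L indicatorCLM 𝕜 (s : Set α)) : C₀(α, 𝕜) →ₗ[𝕜] F)) := by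
    refine Submodule.finiteDimensional_of_le (S₂ := V) ?_
    rintro _ ⟨f, rfl⟩
    change T (indicatorCLM 𝕜 (s : Set α) f) ∈ V
    simp only [indicatorCLM_eq_sum_single, map_sum, map_smul]
    exact Submodule.sum_mem _ fun i hi =>
      Submodule.smul_mem _ _ (Submodule.subset_span ⟨⟨i, hi⟩, rfl⟩)
  exact ContinuousLinearMap.isCompactOperator_of_finiteDimensional_range _

end Discrete

variable {F : Type*} [NormedAddCommGroup F]

lemma dist_comp_indicatorCLM_range {𝕜 : Type*} [NontriviallyNormedField 𝕜] [NormedSpace 𝕜 F]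
    (T : C₀(ℕ, 𝕜) →L[𝕜] F) (n : ℕ) :
    dist (T ∘L indicatorCLM 𝕜 (range n : Set ℕ)) T = ‖T ∘L indicatorCLM 𝕜 (Set.Ici n)‖ := by
  rw [dist_eq_norm' (T ∘L indicatorCLM 𝕜 (range n : Set ℕ)) T]
  congr 1
  ext f : 1
  simp [← map_sub, self_sub_indicatorCLM]

lemma exists_support_subset_Ico_of_lt_norm_comp_indicatorCLM_Ici {𝕜 : Type*}
    [DenselyNormedField 𝕜] [NormedSpace 𝕜 F] (T : C₀(ℕ, 𝕜) →L[𝕜] F)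
    {c : ℝ} {n : ℕ} (hc : c < ‖T ∘L indicatorCLM 𝕜 (Set.Ici n)‖) :
    ∃ g : C₀(ℕ, 𝕜), (‖g‖ ≤ 1 ∧ c < ‖T g‖) ∧ ∃ N, support g ⊆ Set.Ico n N := by
  obtain ⟨f, hf, hcf⟩ := (T ∘L indicatorCLM 𝕜 (Set.Ici n)).exists_lt_apply_of_lt_opNorm hc
  set g := indicatorCLM 𝕜 (Set.Ici n) f
  have hg : ‖g‖ ≤ 1 := (norm_indicatorCLM_apply_le _ f).trans hf.le
  have hlim : Tendsto (fun N => T (indicatorCLM 𝕜 (range N : Set ℕ) g)) atTop (𝓝 (T g)) :=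
    (T.continuous.tendsto g).comp ((tendsto_indicatorCLM_atTop g).comp tendsto_finset_range)
  obtain ⟨N, hN⟩ := (hlim.norm.eventually (lt_mem_nhds hcf)).exists
  refine ⟨_, ⟨(norm_indicatorCLM_apply_le _ g).trans hg, hN⟩, N, ?_⟩
  rw [support_indicatorCLM, support_indicatorCLM, coe_range]
  exact fun x ⟨hxN, hxn, _⟩ => ⟨hxn, hxN⟩

end ZeroAtInftyContinuousMap

open ZeroAtInftyContinuousMap

section NoCopyOfCZero

variable {Y : Type*} [NormedAddCommGroup Y] [NormedSpace ℂ Y]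

lemma unimodularSumsLE_apply_of_pairwise_disjoint {α : Type*} [TopologicalSpace α]
    (T : C₀(α, ℂ) →L[ℂ] Y) {f : ℕ → C₀(α, ℂ)} (hf : ∀ i, ‖f i‖ ≤ 1)
    (hd : Pairwise (Disjoint on fun i => support (f i))) :
    UnimodularSumsLE (fun i => T (f i)) ‖T‖ := fun m w hw => by
  simp_rw [← map_smul, ← map_sum]
  simpa using T.le_opNorm_of_le
    (norm_sum_smul_le_one_of_pairwise_disjoint _ hf hd fun i => (hw i).le)

lemma CUniformConvex.exists_norm_apply_lt_of_pairwise_disjoint (h : CUniformConvex Y)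
    {α : Type*} [TopologicalSpace α] (T : C₀(α, ℂ) →L[ℂ] Y) {f : ℕ → C₀(α, ℂ)}
    (hf : ∀ i, ‖f i‖ ≤ 1) (hd : Pairwise (Disjoint on fun i => support (f i))) {c : ℝ}
    (hc : 0 < c) : ∃ i, ‖T (f i)‖ < c := by
  by_contra! hT
  exact h.not_unimodularSumsLE hc hT _ (unimodularSumsLE_apply_of_pairwise_disjoint T hf hd)

theorem CUniformConvex.isCompactOperator [CompleteSpace Y] (h : CUniformConvex Y)
    (T : C₀(ℕ, ℂ) →L[ℂ] Y) : IsCompactOperator T := by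
  refine isCompactOperator_of_tendsto (F := fun n => T ∘L indicatorCLM ℂ (range n : Set ℕ))
    (Metric.tendsto_atTop.2 fun ε hε => ?_)
    (Eventually.of_forall fun n => isCompactOperator_comp_indicatorCLM T _)
  by_contra! hT
  obtain ⟨g, hg, hd⟩ := exists_seq_pairwise_disjoint_of_forall_exists_subset_Ico
    (fun g : C₀(ℕ, ℂ) => support g) fun N => by
      obtain ⟨n, hn, hεn⟩ := hT N
      obtain ⟨g, hg, M, hM⟩ := exists_support_subset_Ico_of_lt_norm_comp_indicatorCLM_Ici T
        (c := ε / 2) (n := n) (by rw [← dist_comp_indicatorCLM_range]; linarith)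
      exact ⟨g, hg, M, hM.trans (Set.Ico_subset_Ico_left hn)⟩
  obtain ⟨i, hi⟩ := h.exists_norm_apply_lt_of_pairwise_disjoint T (fun i => (hg i).1) hd
    (half_pos hε)
  exact lt_asymm (hg i).2 hi

end NoCopyOfCZero

theorem stmt_7 {Y : Type*} [NormedAddCommGroup Y] [NormedSpace ℂ Y] [CompleteSpace Y]
    (h : CUniformConvex Y) :
    (¬ ∃ T : ZeroAtInftyContinuousMap ℕ ℂ →L[ℂ] Y, ∃ c > (0:ℝ),
        ∀ f : ZeroAtInftyContinuousMap ℕ ℂ, c * ‖f‖ ≤ ‖T f‖) ∧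
      ∀ T : ZeroAtInftyContinuousMap ℕ ℂ →L[ℂ] Y, IsCompactOperator T := by
  refine ⟨fun ⟨T, c, hc, hT⟩ => ?_, h.isCompactOperator⟩
  have hnorm : ∀ i : ℕ, ‖single i (1 : ℂ)‖ = 1 := fun i => by rw [norm_single, norm_one]
  obtain ⟨i, hi⟩ := h.exists_norm_apply_lt_of_pairwise_disjoint T (fun i => (hnorm i).le)
    (pairwise_disjoint_support_single 1) hc
  have := hT (single i 1)
  rw [hnorm, mul_one] at this
  exact this.not_gt hi
end

section
/- Let X be a Banach space such that X = X₁ ⊕₁ X₂ is an ℓ₁-direct sum of two non-trivial subspaces, and let Y be a Banach space. If the pair (X, Y) has the Bishop–Phelps–Bollobás property for range strongly exposing operators (BPBp-RSE), then Y is uniformly convex. -/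
open Filter Topology

instance : Fact ((1:ENNReal) ≤ 1) := ⟨le_rfl⟩

/-!
Suppose `Y` is not uniformly convex: there are unit vectors `y`, `z` with `‖y - z‖ ≥ ε₀` and
`‖y + z‖` arbitrarily close to `2`. Pick unit vectors `xᵢ ∈ Xᵢ` with norming functionals `fᵢ`.
The operator `T (u₁, u₂) = f₁ u₁ • y + f₂ u₂ • z` on `X₁ ⊕₁ X₂` has norm one and almost attains it
at `(x₁ / 2, x₂ / 2)`, so the BPBp-RSE yields a range strongly exposing `S ≈ T` attaining its norm
at some `x₀ ≈ (x₁ / 2, x₂ / 2)`. In the `ℓ₁`-sum, both normalized coordinates `u₁ ≈ (x₁, 0)` and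
`u₂ ≈ (0, x₂)` of `x₀` are norm-attaining for `S`, so `S u₁`, `S u₂` and `S x₀` are unimodular
multiples of one vector, and strict convexity of the scalar field forces `S u₁ = S u₂`. Hence
`y ≈ T u₁ ≈ S u₁ = S u₂ ≈ T u₂ ≈ z`, contradicting `‖y - z‖ ≥ ε₀`.
-/

lemma RCLike.eq_of_norm_ofReal_mul_add_ofReal_mul_eq_one {𝕜 : Type*} [RCLike 𝕜] {l₁ l₂ : 𝕜}
    {a b : ℝ} (h₁ : ‖l₁‖ ≤ 1) (h₂ : ‖l₂‖ ≤ 1) (ha : 0 < a) (hb : 0 < b) (hab : a + b = 1)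
    (h : ‖(a : 𝕜) * l₁ + (b : 𝕜) * l₂‖ = 1) : l₁ = l₂ := by
  by_contra hne
  have := norm_combo_lt_of_ne h₁ h₂ hne ha hb hab
  rw [RCLike.real_smul_eq_coe_mul, RCLike.real_smul_eq_coe_mul, h] at this
  exact this.false

section RSE

variable {𝕜 E F : Type*} [RCLike 𝕜] [NormedAddCommGroup E] [NormedSpace 𝕜 E]
  [NormedAddCommGroup F] [NormedSpace 𝕜 F]

lemma ContinuousLinearMap.norm_apply_eq_of_norm_apply_add_eq (S : E →L[𝕜] F) {v₁ v₂ : E}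
    (hv : ‖v₁‖ + ‖v₂‖ = 1) (hS : ‖S (v₁ + v₂)‖ = ‖S‖) : ‖S v₁‖ = ‖S‖ * ‖v₁‖ := by
  have h₁ := S.le_opNorm v₁
  have h₂ := S.le_opNorm v₂
  have : ‖S‖ ≤ ‖S v₁‖ + ‖S v₂‖ := hS ▸ map_add S v₁ v₂ ▸ norm_add_le _ _
  have hsum : ‖S‖ = ‖S‖ * ‖v₁‖ + ‖S‖ * ‖v₂‖ := by rw [← mul_add, hv, mul_one]
  linarith

lemma ContinuousLinearMap.norm_apply_inv_norm_smul_eq_of_norm_apply_add_eq (S : E →L[𝕜] F)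
    {v₁ v₂ : E} (hv₁ : v₁ ≠ 0) (hv : ‖v₁‖ + ‖v₂‖ = 1) (hS : ‖S (v₁ + v₂)‖ = ‖S‖) :
    ‖S ((‖v₁‖⁻¹ : 𝕜) • v₁)‖ = ‖S‖ := by
  rw [map_smul, norm_smul, S.norm_apply_eq_of_norm_apply_add_eq hv hS, norm_inv,
    RCLike.norm_ofReal, abs_norm, mul_comm ‖S‖, inv_mul_cancel_left₀ (norm_ne_zero_iff.mpr hv₁)]

lemma RSEAt.exists_norm_eq_one_and_apply_eq_smul {S : E →L[𝕜] F} {w₀ : E} (hS : RSEAt 𝕜 S w₀)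
    {u : E} (hu : ‖u‖ ≤ 1) (hSu : ‖S u‖ = ‖S‖) : ∃ l : 𝕜, ‖l‖ = 1 ∧ S u = l • S w₀ := by
  obtain ⟨σ, l, -, hl, hlim⟩ := hS.2.2 (fun _ => u) (fun _ => hu) (by simp [hSu])
  exact ⟨l, hl, tendsto_nhds_unique tendsto_const_nhds hlim⟩

/-- The images of norm-attaining vectors all lie on the circle `{l • S w₀ : ‖l‖ = 1}`, and the
circle of the scalar field is strictly convex. -/
lemma RSEAt.apply_inv_norm_smul_eq {S : E →L[𝕜] F} {w₀ : E} (hS : RSEAt 𝕜 S w₀) {v₁ v₂ : E}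
    (hv₁ : v₁ ≠ 0) (hv₂ : v₂ ≠ 0) (hv : ‖v₁‖ + ‖v₂‖ = 1) (hSv : ‖S (v₁ + v₂)‖ = ‖S‖) :
    S ((‖v₁‖⁻¹ : 𝕜) • v₁) = S ((‖v₂‖⁻¹ : 𝕜) • v₂) := by
  obtain ⟨l₁, hl₁, hSu₁⟩ := hS.exists_norm_eq_one_and_apply_eq_smul
    (norm_smul_inv_norm hv₁).le (S.norm_apply_inv_norm_smul_eq_of_norm_apply_add_eq hv₁ hv hSv)
  obtain ⟨l₂, hl₂, hSu₂⟩ := hS.exists_norm_eq_one_and_apply_eq_smul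
    (norm_smul_inv_norm hv₂).le (S.norm_apply_inv_norm_smul_eq_of_norm_apply_add_eq hv₂
      (by rwa [add_comm]) (by rwa [add_comm]))
  rcases eq_or_ne (S w₀) 0 with hw₀ | hw₀
  · rw [hSu₁, hSu₂, hw₀, smul_zero, smul_zero]
  have hsplit : S (v₁ + v₂) = ((‖v₁‖ : 𝕜) * l₁ + (‖v₂‖ : 𝕜) * l₂) • S w₀ := by
    rw [add_smul, ← smul_smul, ← smul_smul, ← hSu₁, ← hSu₂, ← map_smul, ← map_smul,
      smul_inv_smul₀ (by simpa using hv₁), smul_inv_smul₀ (by simpa using hv₂), map_add]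
  have hcombo : ‖(‖v₁‖ : 𝕜) * l₁ + (‖v₂‖ : 𝕜) * l₂‖ = 1 := by
    rw [hsplit, norm_smul, ← hS.2.1] at hSv
    exact (mul_eq_right₀ (norm_ne_zero_iff.mpr hw₀)).mp hSv
  rw [hSu₁, hSu₂, RCLike.eq_of_norm_ofReal_mul_add_ofReal_mul_eq_one hl₁.le hl₂.le
    (norm_pos_iff.mpr hv₁) (norm_pos_iff.mpr hv₂) hv hcombo]

end RSE

section Normalize

variable {𝕜 E F : Type*} [RCLike 𝕜] [NormedAddCommGroup E] [NormedSpace 𝕜 E]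
  [NormedAddCommGroup F] [NormedSpace 𝕜 F]

lemma norm_inv_norm_smul_sub_le {x : E} (hx : ‖x‖ = 1) (c : E) :
    ‖(‖c‖⁻¹ : 𝕜) • c - x‖ ≤ 2 * ‖c - x‖ := by
  rcases eq_or_ne c 0 with rfl | hc
  · simp [hx]
  have hc' : ‖c‖ ≠ 0 := norm_ne_zero_iff.mpr hc
  have hradial : ‖(‖c‖⁻¹ : 𝕜) • c - c‖ ≤ ‖c - x‖ :=
    calc ‖(‖c‖⁻¹ : 𝕜) • c - c‖ = ‖((‖c‖⁻¹ - 1 : ℝ) : 𝕜) • c‖ := by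
          push_cast; rw [sub_smul, one_smul]
      _ = |(‖c‖⁻¹ - 1) * ‖c‖| := by rw [norm_smul, RCLike.norm_ofReal, abs_mul, abs_norm]
      _ = |‖x‖ - ‖c‖| := by rw [sub_mul, inv_mul_cancel₀ hc', one_mul, hx]
      _ ≤ ‖c - x‖ := by rw [norm_sub_rev]; exact abs_norm_sub_norm_le x c
  calc ‖(‖c‖⁻¹ : 𝕜) • c - x‖ ≤ ‖(‖c‖⁻¹ : 𝕜) • c - c‖ + ‖c - x‖ :=
        norm_sub_le_norm_sub_add_norm_sub _ _ _
    _ ≤ 2 * ‖c - x‖ := by linarith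

lemma ContinuousLinearMap.norm_apply_sub_apply_inv_norm_smul_le {T S : E →L[𝕜] F}
    (hT : ‖T‖ ≤ 1) {e v : E} (he : ‖e‖ = 1) :
    ‖T e - S ((‖v‖⁻¹ : 𝕜) • v)‖ ≤ 4 * ‖v - (2⁻¹ : 𝕜) • e‖ + ‖S - T‖ := by
  set u := (‖v‖⁻¹ : 𝕜) • v
  have hu : ‖u‖ ≤ 1 := by
    rcases eq_or_ne v 0 with rfl | hv
    · simp [u]
    · exact (norm_smul_inv_norm hv).le
  have hue : ‖u - e‖ ≤ 4 * ‖v - (2⁻¹ : 𝕜) • e‖ := by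
    have hscale : (‖(2 : 𝕜) • v‖⁻¹ : 𝕜) • (2 : 𝕜) • v = u := by
      rw [norm_smul, smul_smul, RCLike.norm_two]
      push_cast
      rw [mul_inv, mul_comm (2⁻¹ : 𝕜), inv_mul_cancel_right₀ two_ne_zero]
    have htwice : ‖(2 : 𝕜) • v - e‖ = 2 * ‖v - (2⁻¹ : 𝕜) • e‖ := by
      rw [← RCLike.norm_two (K := 𝕜), ← norm_smul, smul_sub, smul_inv_smul₀ two_ne_zero]
    have := norm_inv_norm_smul_sub_le (𝕜 := 𝕜) he ((2 : 𝕜) • v)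
    rw [hscale, htwice] at this
    linarith
  calc ‖T e - S u‖ = ‖T (e - u) - (S - T) u‖ := by simp
    _ ≤ ‖T‖ * ‖e - u‖ + ‖S - T‖ * ‖u‖ :=
        norm_sub_le_of_le (T.le_opNorm _) ((S - T).le_opNorm _)
    _ ≤ 1 * ‖e - u‖ + ‖S - T‖ * 1 := by gcongr
    _ ≤ 4 * ‖v - (2⁻¹ : 𝕜) • e‖ + ‖S - T‖ := by rw [norm_sub_rev]; linarith

lemma ne_zero_of_norm_sub_lt_norm {v e : E} (h : ‖v - e‖ < ‖e‖) : v ≠ 0 := by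
  rintro rfl
  simp at h

end Normalize

lemma exists_norm_eq_one_and_dual_apply_eq_one (𝕜 E : Type*) [RCLike 𝕜]
    [NormedAddCommGroup E] [NormedSpace 𝕜 E] [Nontrivial E] :
    ∃ (x : E) (f : E →L[𝕜] 𝕜), ‖x‖ = 1 ∧ ‖f‖ ≤ 1 ∧ f x = 1 := by
  obtain ⟨v, hv⟩ := exists_ne (0 : E)
  have hx : ‖(‖v‖⁻¹ : 𝕜) • v‖ = 1 := norm_smul_inv_norm hv
  obtain ⟨f, hf, hfx⟩ := exists_dual_vector'' 𝕜 ((‖v‖⁻¹ : 𝕜) • v)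
  exact ⟨_, f, hx, hf, by rw [hfx, hx, RCLike.ofReal_one]⟩

section L1Sum

open WithLp

variable {𝕜 X₁ X₂ Y : Type*} [RCLike 𝕜] [NormedAddCommGroup X₁] [NormedSpace 𝕜 X₁]
  [NormedAddCommGroup X₂] [NormedSpace 𝕜 X₂] [NormedAddCommGroup Y] [NormedSpace 𝕜 Y]

variable (𝕜) in
def l1Coprod (g₁ : X₁ →L[𝕜] Y) (g₂ : X₂ →L[𝕜] Y) : WithLp 1 (X₁ × X₂) →L[𝕜] Y :=
  (g₁.coprod g₂).comp (prodContinuousLinearEquiv 1 𝕜 X₁ X₂).toContinuousLinearMap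

@[simp]
lemma l1Coprod_apply (g₁ : X₁ →L[𝕜] Y) (g₂ : X₂ →L[𝕜] Y) (x : WithLp 1 (X₁ × X₂)) :
    l1Coprod 𝕜 g₁ g₂ x = g₁ x.fst + g₂ x.snd :=
  rfl

lemma norm_l1Coprod_le (g₁ : X₁ →L[𝕜] Y) (g₂ : X₂ →L[𝕜] Y) :
    ‖l1Coprod 𝕜 g₁ g₂‖ ≤ max ‖g₁‖ ‖g₂‖ := by
  refine ContinuousLinearMap.opNorm_le_bound _ (by positivity) fun x => ?_
  rw [l1Coprod_apply, prod_norm_eq_of_L1, mul_add]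
  calc ‖g₁ x.fst + g₂ x.snd‖ ≤ ‖g₁‖ * ‖x.fst‖ + ‖g₂‖ * ‖x.snd‖ :=
        norm_add_le_of_le (g₁.le_opNorm _) (g₂.le_opNorm _)
    _ ≤ max ‖g₁‖ ‖g₂‖ * ‖x.fst‖ + max ‖g₁‖ ‖g₂‖ * ‖x.snd‖ := by
        gcongr
        exacts [le_max_left _ _, le_max_right _ _]

lemma exists_norm_eq_one_apply_inl_eq_apply_inr_eq [Nontrivial X₁] [Nontrivial X₂] {y z : Y}
    (hy : ‖y‖ = 1) (hz : ‖z‖ = 1) :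
    ∃ (T : WithLp 1 (X₁ × X₂) →L[𝕜] Y) (x₁ : X₁) (x₂ : X₂), ‖T‖ = 1 ∧ ‖x₁‖ = 1 ∧ ‖x₂‖ = 1 ∧
      T (toLp 1 (x₁, 0)) = y ∧ T (toLp 1 (0, x₂)) = z := by
  obtain ⟨x₁, f₁, hx₁, hf₁, hf₁x₁⟩ := exists_norm_eq_one_and_dual_apply_eq_one 𝕜 X₁
  obtain ⟨x₂, f₂, hx₂, hf₂, hf₂x₂⟩ := exists_norm_eq_one_and_dual_apply_eq_one 𝕜 X₂
  set T := l1Coprod 𝕜 (f₁.smulRight y) (f₂.smulRight z)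
  have hTe₁ : T (toLp 1 (x₁, 0)) = y := by simp [T, hf₁x₁]
  have hT_le : ‖T‖ ≤ 1 := (norm_l1Coprod_le _ _).trans <| max_le
    (by rwa [ContinuousLinearMap.norm_smulRight_apply, hy, mul_one])
    (by rwa [ContinuousLinearMap.norm_smulRight_apply, hz, mul_one])
  have hT_ge : 1 ≤ ‖T‖ := by
    simpa [hTe₁, hy, hx₁] using T.le_opNorm (toLp 1 (x₁, (0 : X₂)))
  exact ⟨T, x₁, x₂, le_antisymm hT_le hT_ge, hx₁, hx₂, hTe₁, by simp [T, hf₂x₂]⟩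

lemma RSEAt.apply_inv_norm_smul_toLp_fst_eq_toLp_snd {S : WithLp 1 (X₁ × X₂) →L[𝕜] Y}
    {w₀ : WithLp 1 (X₁ × X₂)} (hS : RSEAt 𝕜 S w₀) {x : WithLp 1 (X₁ × X₂)} (hx : ‖x‖ = 1)
    (hSx : ‖S x‖ = ‖S‖) (h₁ : x.fst ≠ 0) (h₂ : x.snd ≠ 0) :
    S ((‖toLp 1 (x.fst, (0 : X₂))‖⁻¹ : 𝕜) • toLp 1 (x.fst, 0)) =
      S ((‖toLp 1 ((0 : X₁), x.snd)‖⁻¹ : 𝕜) • toLp 1 (0, x.snd)) := by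
  refine hS.apply_inv_norm_smul_eq (by simpa using h₁) (by simpa using h₂) ?_ ?_
  · simpa [prod_norm_eq_of_L1] using hx
  · rwa [show toLp 1 (x.fst, 0) + toLp 1 (0, x.snd) = x by rw [WithLp.ext_iff]; ext <;> simp]

theorem norm_sub_le_of_forall_rse_approx [Nontrivial X₁] [Nontrivial X₂] {ε η : ℝ} (hε : ε < 1 / 2)
    (happrox : ∀ T : WithLp 1 (X₁ × X₂) →L[𝕜] Y, ‖T‖ = 1 → ∀ x : WithLp 1 (X₁ × X₂), ‖x‖ = 1 →
      1 - η < ‖T x‖ → ∃ (S : WithLp 1 (X₁ × X₂) →L[𝕜] Y) (x₀ : WithLp 1 (X₁ × X₂)),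
        RSE 𝕜 S ∧ ‖x₀‖ = 1 ∧ ‖S‖ = 1 ∧ ‖S x₀‖ = 1 ∧ ‖S - T‖ < ε ∧ ‖x - x₀‖ < ε)
    {y z : Y} (hy : ‖y‖ = 1) (hz : ‖z‖ = 1) (hyz : 2 - 2 * η < ‖y + z‖) :
    ‖y - z‖ ≤ 10 * ε := by
  obtain ⟨T, x₁, x₂, hT, hx₁, hx₂, hTe₁, hTe₂⟩ :=
    exists_norm_eq_one_apply_inl_eq_apply_inr_eq (X₁ := X₁) (X₂ := X₂) (𝕜 := 𝕜) hy hz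
  set e₁ : WithLp 1 (X₁ × X₂) := toLp 1 (x₁, 0)
  set e₂ : WithLp 1 (X₁ × X₂) := toLp 1 (0, x₂)
  have he₁ : ‖e₁‖ = 1 := (norm_toLp_fst 1 X₁ X₂ x₁).trans hx₁
  have he₂ : ‖e₂‖ = 1 := (norm_toLp_snd 1 X₁ X₂ x₂).trans hx₂
  set pt : WithLp 1 (X₁ × X₂) := (2⁻¹ : 𝕜) • (e₁ + e₂)
  have hpt : ‖pt‖ = 1 := by
    simp [pt, e₁, e₂, norm_smul, prod_norm_eq_of_L1, hx₁, hx₂]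
    norm_num
  have hTpt : 1 - η < ‖T pt‖ := by
    rw [map_smul, map_add, hTe₁, hTe₂, norm_smul, norm_inv, RCLike.norm_two]
    linarith
  obtain ⟨S, x₀, ⟨w₀, hw₀⟩, hx₀, hS, hSx₀, hST, hptx₀⟩ := happrox T hT pt hpt hTpt
  set v₁ : WithLp 1 (X₁ × X₂) := toLp 1 (x₀.fst, 0)
  set v₂ : WithLp 1 (X₁ × X₂) := toLp 1 (0, x₀.snd)
  have hsplit : ‖pt - x₀‖ = ‖v₁ - (2⁻¹ : 𝕜) • e₁‖ + ‖v₂ - (2⁻¹ : 𝕜) • e₂‖ := by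
    rw [norm_sub_rev]
    simp [prod_norm_eq_of_L1, v₁, v₂, e₁, e₂, pt]
  have hv₁e₁ : ‖v₁ - (2⁻¹ : 𝕜) • e₁‖ < ε := by linarith [norm_nonneg (v₂ - (2⁻¹ : 𝕜) • e₂)]
  have hv₂e₂ : ‖v₂ - (2⁻¹ : 𝕜) • e₂‖ < ε := by linarith [norm_nonneg (v₁ - (2⁻¹ : 𝕜) • e₁)]
  have hhalf : ∀ e : WithLp 1 (X₁ × X₂), ‖e‖ = 1 → ‖(2⁻¹ : 𝕜) • e‖ = 1 / 2 := fun e he => by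
    rw [norm_smul, he]; norm_num
  have hx₀₁ : x₀.fst ≠ 0 := fun h =>
    ne_zero_of_norm_sub_lt_norm (v := v₁) (by rw [hhalf e₁ he₁]; linarith) (by simp [v₁, h])
  have hx₀₂ : x₀.snd ≠ 0 := fun h =>
    ne_zero_of_norm_sub_lt_norm (v := v₂) (by rw [hhalf e₂ he₂]; linarith) (by simp [v₂, h])
  have hSu : S ((‖v₁‖⁻¹ : 𝕜) • v₁) = S ((‖v₂‖⁻¹ : 𝕜) • v₂) :=
    hw₀.apply_inv_norm_smul_toLp_fst_eq_toLp_snd hx₀ (by rw [hSx₀, hS]) hx₀₁ hx₀₂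
  have hy' := T.norm_apply_sub_apply_inv_norm_smul_le (S := S) hT.le he₁ (v := v₁)
  have hz' := T.norm_apply_sub_apply_inv_norm_smul_le (S := S) hT.le he₂ (v := v₂)
  rw [hTe₁] at hy'
  rw [hTe₂, ← hSu] at hz'
  calc ‖y - z‖ ≤ ‖y - S ((‖v₁‖⁻¹ : 𝕜) • v₁)‖ + ‖S ((‖v₁‖⁻¹ : 𝕜) • v₁) - z‖ :=
        norm_sub_le_norm_sub_add_norm_sub _ _ _
    _ ≤ 10 * ε := by rw [norm_sub_rev _ z]; linarith

end L1Sum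

theorem stmt_8_general {𝕜 X₁ X₂ Y : Type*} [RCLike 𝕜]
    [NormedAddCommGroup X₁] [NormedSpace 𝕜 X₁] [Nontrivial X₁]
    [NormedAddCommGroup X₂] [NormedSpace 𝕜 X₂] [Nontrivial X₂]
    [NormedAddCommGroup Y] [NormedSpace 𝕜 Y]
    (h : BPBpRSE 𝕜 (WithLp 1 (X₁ × X₂)) Y) : UniformConvexSpace Y := by
  refine ⟨fun ε₀ hε₀ => ?_⟩
  set ε := min (1 / 4) (ε₀ / 11)
  obtain ⟨η, hη, -, happrox⟩ := h ε (by positivity)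
  refine ⟨2 * η, by positivity, fun y hy z hz hyz => ?_⟩
  by_contra! hsum
  have hclose := norm_sub_le_of_forall_rse_approx
    ((min_le_left _ _).trans_lt (by norm_num)) happrox hy hz hsum
  linarith [min_le_right (1 / 4) (ε₀ / 11)]

theorem stmt_8 {𝕜 X₁ X₂ Y : Type*} [RCLike 𝕜]
    [NormedAddCommGroup X₁] [NormedSpace 𝕜 X₁] [CompleteSpace X₁] [Nontrivial X₁]
    [NormedAddCommGroup X₂] [NormedSpace 𝕜 X₂] [CompleteSpace X₂] [Nontrivial X₂]
    [NormedAddCommGroup Y] [NormedSpace 𝕜 Y] [CompleteSpace Y]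
    (h : BPBpRSE 𝕜 (WithLp 1 (X₁ × X₂)) Y) : UniformConvexSpace Y :=
  stmt_8_general h
end

section
/- Let X and Y be real Banach spaces such that X = X₁ ⊕∞ X₂ is an ℓ∞-direct sum of two non-trivial subspaces. If the pair (X, Y) has the BPBp-RSE, then Y is uniformly convex. -/
open Filter Topology

instance : Fact ((1:ENNReal) ≤ ⊤) := ⟨le_top⟩

/-!
Given unit vectors `y, z` with `‖y + z‖` close to `2`, pick unit vectors `a ∈ X₁`, `b ∈ X₂` with
norming functionals `f, g`. The operator `T (u, v) = f u • (y + z) / 2 + g v • (y - z) / 2` on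
`X₁ ⊕∞ X₂` has norm one and almost attains it at `(a, 0)`, so the BPBp-RSE yields a range strongly
exposing `S` near `T` attaining its norm at some `x₀` near `(a, 0)`. The second coordinate of `x₀`
is small, so `x₀` can be moved along `0 ⊕ X₂` inside the unit ball; over `ℝ` the range of `S` on
norm attainers is `{± S w}`, which forces `S = 0` on `0 ⊕ X₂`. Hence `‖(y - z) / 2‖ = ‖T (0, b)‖`
is at most `‖T - S‖`, which is small.
-/

open WithLp
open scoped ENNReal

theorem ContinuousLinearMap.norm_apply_add_eq_opNorm {𝕜 E F : Type*} [RCLike 𝕜]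
    [NormedAddCommGroup E] [NormedSpace 𝕜 E] [NormedAddCommGroup F] [NormedSpace 𝕜 F]
    (S : E →L[𝕜] F) {x d : E} (hSx : ‖S x‖ = ‖S‖) (hadd : ‖x + d‖ ≤ 1) (hsub : ‖x - d‖ ≤ 1) :
    ‖S (x + d)‖ = ‖S‖ := by
  have hle : ∀ v : E, ‖v‖ ≤ 1 → ‖S v‖ ≤ ‖S‖ := fun v hv =>
    S.le_of_opNorm_le_of_le le_rfl hv |>.trans_eq (mul_one _)
  have hsum : S (x + d) + S (x - d) = S x + S x := by
    rw [← map_add, ← map_add, add_add_sub_cancel]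
  have htri := norm_add_le (S (x + d)) (S (x - d))
  rw [hsum, ← two_smul ℕ, RCLike.norm_nsmul 𝕜, hSx, nsmul_eq_mul, Nat.cast_ofNat] at htri
  linarith [hle _ hadd, hle _ hsub]

theorem RSEAt.exists_eq_smul_of_norm_eq {𝕜 X Y : Type*} [RCLike 𝕜] [NormedAddCommGroup X]
    [NormedSpace 𝕜 X] [NormedAddCommGroup Y] [NormedSpace 𝕜 Y] {S : X →L[𝕜] Y} {w : X} (hw : RSEAt 𝕜 S w)
    {x : X} (hx : ‖x‖ ≤ 1) (hSx : ‖S x‖ = ‖S‖) : ∃ l : 𝕜, ‖l‖ = 1 ∧ S x = l • S w := by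
  obtain ⟨σ, l, -, hl, hlim⟩ := hw.2.2 (fun _ => x) (fun _ => hx) (hSx ▸ tendsto_const_nhds)
  exact ⟨l, hl, tendsto_nhds_unique tendsto_const_nhds hlim⟩

section Real

variable {X Y : Type*} [NormedAddCommGroup X] [NormedSpace ℝ X]
  [NormedAddCommGroup Y] [NormedSpace ℝ Y]

/-- In a real space, `S x`, `S (x + d)` and `S (x - d)` all lie in `{S w, -S w}` and the first is
the midpoint of the other two, so all three coincide. -/
theorem RSEAt.apply_eq_zero {S : X →L[ℝ] Y} {w : X} (hw : RSEAt ℝ S w) {x d : X}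
    (hSx : ‖S x‖ = ‖S‖) (hadd : ‖x + d‖ ≤ 1) (hsub : ‖x - d‖ ≤ 1) : S d = 0 := by
  have hx : ‖x‖ ≤ 1 := by
    have h2x : ‖(2 : ℝ) • x‖ ≤ ‖x + d‖ + ‖x - d‖ := by
      rw [show (2 : ℝ) • x = (x + d) + (x - d) by module]
      exact norm_add_le _ _
    rw [norm_smul, Real.norm_two] at h2x
    linarith
  have hSadd := S.norm_apply_add_eq_opNorm hSx hadd hsub
  have hSsub := S.norm_apply_add_eq_opNorm (d := -d) hSx (by rwa [← sub_eq_add_neg])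
    (by rwa [sub_neg_eq_add])
  rw [← sub_eq_add_neg] at hSsub
  obtain ⟨l₀, hl₀, e₀⟩ := hw.exists_eq_smul_of_norm_eq hx hSx
  obtain ⟨lp, hlp, ep⟩ := hw.exists_eq_smul_of_norm_eq hadd hSadd
  obtain ⟨lm, hlm, em⟩ := hw.exists_eq_smul_of_norm_eq hsub hSsub
  have hd : S d = (lp - l₀) • S w := by rw [sub_smul, ← ep, ← e₀, map_add, add_sub_cancel_left]
  by_cases hSw : S w = 0
  · rw [hd, hSw, smul_zero]
  have hmid : lp + lm = 2 * l₀ := by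
    refine smul_left_injective ℝ hSw ?_
    simp only [add_smul, mul_smul, ← e₀, ← ep, ← em, map_add, map_sub]
    module
  rw [Real.norm_eq_abs] at hl₀ hlp hlm
  have hlp_eq : lp = l₀ := by
    rcases (abs_eq zero_le_one).1 hl₀ with h₀ | h₀ <;>
    rcases (abs_eq zero_le_one).1 hlp with h₁ | h₁ <;>
    rcases (abs_eq zero_le_one).1 hlm with h₂ | h₂ <;> linarith
  rw [hd, hlp_eq, sub_self, zero_smul]

theorem norm_smul_add_smul_sub_le_max {y z : Y} (hy : ‖y‖ ≤ 1) (hz : ‖z‖ ≤ 1) (α β : ℝ) :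
    ‖α • ((2 : ℝ)⁻¹ • (y + z)) + β • ((2 : ℝ)⁻¹ • (y - z))‖ ≤ max |α| |β| := by
  have hmax : |α + β| + |α - β| ≤ 2 * max |α| |β| := by
    cases abs_cases (α + β) <;> cases abs_cases (α - β) <;>
      linarith [le_abs_self α, neg_abs_le α, le_abs_self β, neg_abs_le β,
        le_max_left |α| |β|, le_max_right |α| |β|]
  calc ‖α • ((2 : ℝ)⁻¹ • (y + z)) + β • ((2 : ℝ)⁻¹ • (y - z))‖
      = ‖((α + β) / 2) • y + ((α - β) / 2) • z‖ := by congr 1; module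
    _ ≤ |α + β| / 2 * ‖y‖ + |α - β| / 2 * ‖z‖ := by
      refine (norm_add_le _ _).trans_eq ?_
      rw [norm_smul, norm_smul, Real.norm_eq_abs, Real.norm_eq_abs, abs_div, abs_div, abs_two]
    _ ≤ |α + β| / 2 + |α - β| / 2 := by
      gcongr <;> [exact mul_le_of_le_one_right (by positivity) hy;
        exact mul_le_of_le_one_right (by positivity) hz]
    _ ≤ max |α| |β| := by linarith

variable {X₁ X₂ : Type*} [NormedAddCommGroup X₁] [NormedSpace ℝ X₁]
  [NormedAddCommGroup X₂] [NormedSpace ℝ X₂]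

theorem RSEAt.apply_toLp_zero_eq_zero {S : WithLp ∞ (X₁ × X₂) →L[ℝ] Y} {w : WithLp ∞ (X₁ × X₂)}
    (hw : RSEAt ℝ S w) {x : WithLp ∞ (X₁ × X₂)} (hx : ‖x‖ ≤ 1) (hSx : ‖S x‖ = ‖S‖)
    (hx₂ : ‖x.snd‖ < 1) (v : X₂) : S (toLp ∞ (0, v)) = 0 := by
  set t := (1 - ‖x.snd‖) / (‖v‖ + 1)
  have ht : 0 < t := div_pos (by linarith) (by positivity)
  have htv : t * ‖v‖ ≤ 1 - ‖x.snd‖ := by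
    rw [div_mul_eq_mul_div, div_le_iff₀ (by positivity)]
    nlinarith [norm_nonneg v]
  have hball : ∀ u : X₂, ‖u‖ ≤ t * ‖v‖ → ‖x + toLp ∞ (0, u)‖ ≤ 1 := fun u hu => by
    simp only [prod_norm_eq_sup, add_fst, add_snd, toLp_fst, toLp_snd, add_zero]
    exact max_le ((le_max_left _ _).trans hx) (by linarith [norm_add_le x.snd u])
  have htv' : ‖t • v‖ ≤ t * ‖v‖ := by rw [norm_smul, Real.norm_of_nonneg ht.le]
  have hsub : ‖x - toLp ∞ (0, t • v)‖ ≤ 1 := by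
    rw [sub_eq_add_neg, ← toLp_neg, Prod.neg_mk, neg_zero]
    exact hball _ (by rwa [norm_neg])
  have hd := hw.apply_eq_zero hSx (hball _ htv') hsub
  rwa [← smul_zero t, ← Prod.smul_mk, toLp_smul, map_smul, smul_eq_zero_iff_right ht.ne'] at hd

variable (X₁ X₂) in
theorem exists_opNorm_eq_one_apply_toLp [Nontrivial X₁] [Nontrivial X₂] {y z : Y}
    (hy : ‖y‖ = 1) (hz : ‖z‖ = 1) :
    ∃ (a : X₁) (b : X₂) (T : WithLp ∞ (X₁ × X₂) →L[ℝ] Y), ‖a‖ = 1 ∧ ‖b‖ = 1 ∧ ‖T‖ = 1 ∧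
      T (toLp ∞ (a, 0)) = (2 : ℝ)⁻¹ • (y + z) ∧ T (toLp ∞ (0, b)) = (2 : ℝ)⁻¹ • (y - z) := by
  obtain ⟨a, ha⟩ := exists_norm_eq X₁ zero_le_one
  obtain ⟨b, hb⟩ := exists_norm_eq X₂ zero_le_one
  obtain ⟨f, hf, hfa⟩ := exists_dual_vector' ℝ a
  obtain ⟨g, hg, hgb⟩ := exists_dual_vector' ℝ b
  let T : WithLp ∞ (X₁ × X₂) →L[ℝ] Y :=
    (f.comp (fstL ∞ ℝ X₁ X₂)).smulRight ((2 : ℝ)⁻¹ • (y + z)) +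
      (g.comp (sndL ∞ ℝ X₁ X₂)).smulRight ((2 : ℝ)⁻¹ • (y - z))
  have hT : ∀ x, T x = f x.fst • ((2 : ℝ)⁻¹ • (y + z)) + g x.snd • ((2 : ℝ)⁻¹ • (y - z)) :=
    fun _ => rfl
  have hT_le : ‖T‖ ≤ 1 := T.opNorm_le_bound zero_le_one fun x => by
    rw [hT, one_mul, prod_norm_eq_sup]
    refine (norm_smul_add_smul_sub_le_max hy.le hz.le _ _).trans (max_le_max ?_ ?_)
    · simpa [hf] using f.le_opNorm x.fst
    · simpa [hg] using g.le_opNorm x.snd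
  have hTab : T (toLp ∞ (a, b)) = y := by
    rw [hT, toLp_fst, toLp_snd, hfa, hgb, ha, hb]
    module
  refine ⟨a, b, T, ha, hb, le_antisymm hT_le ?_, by simp [hT, hfa, ha], by simp [hT, hgb, hb]⟩
  simpa [hTab, hy, prod_norm_eq_sup, ha, hb] using T.le_opNorm (toLp ∞ (a, b))

end Real

theorem stmt_9_general {X₁ X₂ Y : Type*}
    [NormedAddCommGroup X₁] [NormedSpace ℝ X₁] [Nontrivial X₁]
    [NormedAddCommGroup X₂] [NormedSpace ℝ X₂] [Nontrivial X₂]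
    [NormedAddCommGroup Y] [NormedSpace ℝ Y]
    (h : BPBpRSE ℝ (WithLp ⊤ (X₁ × X₂)) Y) : UniformConvexSpace Y := by
  refine ⟨fun ε hε => ?_⟩
  obtain ⟨η, hη, -, hBPB⟩ := h (min (ε / 2) 1) (by positivity)
  refine ⟨η, hη, fun y hy z hz hyz => ?_⟩
  by_contra! hyz'
  obtain ⟨a, b, T, ha, hb, hT, hTa, hTb⟩ := exists_opNorm_eq_one_apply_toLp X₁ X₂ hy hz
  have hTa_large : 1 - η < ‖T (toLp ∞ (a, 0))‖ := by
    rw [hTa, norm_smul, Real.norm_of_nonneg (by norm_num)]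
    linarith
  obtain ⟨S, x₀, ⟨w, hw⟩, hx₀, hS, hSx₀, hST, hx₀a⟩ := hBPB T hT _ (by simpa using ha) hTa_large
  have hx₀₂ : ‖x₀.snd‖ < 1 := calc
    ‖x₀.snd‖ = ‖(toLp ∞ (a, 0) - x₀).snd‖ := by simp
    _ ≤ ‖toLp ∞ (a, 0) - x₀‖ := le_max_right _ _
    _ < min (ε / 2) 1 := hx₀a
    _ ≤ 1 := min_le_right _ _
  have hSb := hw.apply_toLp_zero_eq_zero hx₀.le (hSx₀.trans hS.symm) hx₀₂ b
  have : ‖(2 : ℝ)⁻¹ • (y - z)‖ < ε / 2 := calc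
    _ = ‖(S - T) (toLp ∞ (0, b))‖ := by simp [hSb, hTb]
    _ ≤ ‖S - T‖ := by simpa [hb] using (S - T).le_opNorm (toLp ∞ (0, b))
    _ < min (ε / 2) 1 := hST
    _ ≤ ε / 2 := min_le_left _ _
  rw [norm_smul, Real.norm_of_nonneg (by norm_num)] at this
  linarith

theorem stmt_9 {X₁ X₂ Y : Type*}
    [NormedAddCommGroup X₁] [NormedSpace ℝ X₁] [CompleteSpace X₁] [Nontrivial X₁]
    [NormedAddCommGroup X₂] [NormedSpace ℝ X₂] [CompleteSpace X₂] [Nontrivial X₂]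
    [NormedAddCommGroup Y] [NormedSpace ℝ Y] [CompleteSpace Y]
    (h : BPBpRSE ℝ (WithLp ⊤ (X₁ × X₂)) Y) : UniformConvexSpace Y :=
  stmt_9_general h
end

section
/- The pair (ℓ₁², ℓ₁²) of real two-dimensional ℓ₁ spaces does not have the BPBp-RSE. -/
open Filter Topology

/-! Test the property at `ε = 1/2` on `T = id` and `x = (1/2, 1/2)`. The resulting `S` satisfies
`‖S - id‖ < 1`, so it is injective, and it attains its norm at a point `x₀` in the open segment
between `e₁` and `e₂` on the `ℓ₁` sphere, hence also at `e₁` and at `e₂`. Feeding the constant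
sequences `e₁` and `e₂` to the range strong exposition gives `S e₁ = ±S z = ±S e₂`, so
`e₁ = ±e₂` by injectivity, which is absurd. -/

open WithLp

theorem norm_eq_one_of_one_le_norm_smul_add_smul {E : Type*} [SeminormedAddCommGroup E]
    [NormedSpace ℝ E] {y z : E} {a b : ℝ} (ha : 0 < a) (hb : 0 ≤ b) (hab : a + b = 1)
    (hy : ‖y‖ ≤ 1) (hz : ‖z‖ ≤ 1) (h : 1 ≤ ‖a • y + b • z‖) : ‖y‖ = 1 := by
  have hcomb : 1 ≤ a * ‖y‖ + b * ‖z‖ :=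
    calc 1 ≤ ‖a • y + b • z‖ := h
      _ ≤ ‖a • y‖ + ‖b • z‖ := norm_add_le _ _
      _ = a * ‖y‖ + b * ‖z‖ := by
        rw [norm_smul, norm_smul, Real.norm_of_nonneg ha.le, Real.norm_of_nonneg hb]
  nlinarith [mul_le_mul_of_nonneg_left hz hb]

theorem ContinuousLinearMap.injective_of_norm_sub_id_lt_one {𝕜 X : Type*} [RCLike 𝕜]
    [NormedAddCommGroup X] [NormedSpace 𝕜 X] {S : X →L[𝕜] X}
    (h : ‖S - ContinuousLinearMap.id 𝕜 X‖ < 1) : Function.Injective S := by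
  refine (injective_iff_map_eq_zero S).2 fun v hv => norm_le_zero_iff.1 ?_
  have hle : ‖v‖ ≤ ‖S - ContinuousLinearMap.id 𝕜 X‖ * ‖v‖ := by
    simpa [hv] using (S - ContinuousLinearMap.id 𝕜 X).le_opNorm v
  nlinarith [norm_nonneg v]

section RSE

variable {X Y : Type*} [NormedAddCommGroup X] [NormedAddCommGroup Y]

theorem RSEAt.exists_norm_eq_one_apply_eq_smul {𝕜 : Type*} [RCLike 𝕜] [NormedSpace 𝕜 X]
    [NormedSpace 𝕜 Y] {S : X →L[𝕜] Y} {x₀ e : X} (h : RSEAt 𝕜 S x₀)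
    (he : ‖e‖ ≤ 1) (hSe : ‖S e‖ = ‖S‖) : ∃ l : 𝕜, ‖l‖ = 1 ∧ S e = l • S x₀ := by
  obtain ⟨-, l, -, hl, hlim⟩ := h.2.2 (fun _ => e) (fun _ => he) (by simp [hSe])
  exact ⟨l, hl, tendsto_nhds_unique tendsto_const_nhds hlim⟩

theorem RSEAt.apply_eq_or_apply_eq_neg [NormedSpace ℝ X] [NormedSpace ℝ Y] {S : X →L[ℝ] Y}
    {x₀ e e' : X} (h : RSEAt ℝ S x₀) (he : ‖e‖ ≤ 1) (hSe : ‖S e‖ = ‖S‖) (he' : ‖e'‖ ≤ 1)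
    (hSe' : ‖S e'‖ = ‖S‖) :
    S e = S e' ∨ S e = -S e' := by
  obtain ⟨l, hl, hl_eq⟩ := h.exists_norm_eq_one_apply_eq_smul he hSe
  obtain ⟨l', hl', hl'_eq⟩ := h.exists_norm_eq_one_apply_eq_smul he' hSe'
  rw [Real.norm_eq_abs] at hl hl'
  have hsq : l' * l' = 1 := by rw [← abs_mul_abs_self, hl', one_mul]
  have hSe_eq : S e = (l * l') • S e' := by
    rw [hl_eq, hl'_eq, smul_smul, mul_assoc, hsq, mul_one]
  rcases (abs_eq zero_le_one).1 (show |l * l'| = 1 by rw [abs_mul, hl, hl', one_mul])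
    with h1 | h1 <;> simp [hSe_eq, h1]

end RSE

theorem WithLp.eq_fst_smul_add_snd_smul {p : ENNReal} {R : Type*} [Ring R]
    (x : WithLp p (R × R)) :
    x = x.fst • toLp p ((1 : R), (0 : R)) + x.snd • toLp p ((0 : R), (1 : R)) := by
  rw [WithLp.ext_iff]
  ext <;> simp

theorem WithLp.fst_pos_and_snd_pos_of_norm_sub_lt (x : WithLp 1 (ℝ × ℝ))
    (h : ‖toLp 1 ((1 : ℝ) / 2, (1 : ℝ) / 2) - x‖ < 1 / 2) : 0 < x.fst ∧ 0 < x.snd := by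
  rw [prod_norm_eq_of_L1, sub_fst, sub_snd, toLp_fst, toLp_snd, Real.norm_eq_abs,
    Real.norm_eq_abs] at h
  have h₁ := abs_nonneg (1 / 2 - x.fst)
  have h₂ := abs_nonneg (1 / 2 - x.snd)
  exact ⟨by linarith [(abs_lt.1 (show |1 / 2 - x.fst| < 1 / 2 by linarith)).2],
    by linarith [(abs_lt.1 (show |1 / 2 - x.snd| < 1 / 2 by linarith)).2]⟩

theorem norm_apply_basis_eq_one_of_norm_apply_eq_one {Y : Type*} [NormedAddCommGroup Y]
    [NormedSpace ℝ Y] {S : WithLp 1 (ℝ × ℝ) →L[ℝ] Y} (hS : ‖S‖ ≤ 1) {x : WithLp 1 (ℝ × ℝ)}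
    (hx : ‖x‖ = 1) (hSx : ‖S x‖ = 1) (h₁ : 0 < x.fst) (h₂ : 0 < x.snd) :
    ‖S (toLp 1 ((1 : ℝ), (0 : ℝ)))‖ = 1 ∧ ‖S (toLp 1 ((0 : ℝ), (1 : ℝ)))‖ = 1 := by
  have hsum : x.fst + x.snd = 1 := by
    rwa [prod_norm_eq_of_L1, Real.norm_of_nonneg h₁.le, Real.norm_of_nonneg h₂.le] at hx
  have hle (v : WithLp 1 (ℝ × ℝ)) (hv : ‖v‖ = 1) : ‖S v‖ ≤ 1 := by
    simpa [hv] using S.le_of_opNorm_le hS v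
  have hcomb : 1 ≤ ‖x.fst • S (toLp 1 ((1 : ℝ), (0 : ℝ))) +
      x.snd • S (toLp 1 ((0 : ℝ), (1 : ℝ)))‖ := by
    rw [← map_smul, ← map_smul, ← map_add, ← eq_fst_smul_add_snd_smul, hSx]
  have he₁ := hle (toLp 1 ((1 : ℝ), (0 : ℝ))) (by simp)
  have he₂ := hle (toLp 1 ((0 : ℝ), (1 : ℝ))) (by simp)
  exact ⟨norm_eq_one_of_one_le_norm_smul_add_smul h₁ h₂.le hsum he₁ he₂ hcomb,
    norm_eq_one_of_one_le_norm_smul_add_smul h₂ h₁.le (by linarith) he₂ he₁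
      (by rwa [add_comm] at hcomb)⟩

theorem stmt_10 : ¬ BPBpRSE ℝ (WithLp 1 (ℝ × ℝ)) (WithLp 1 (ℝ × ℝ)) := by
  intro h
  obtain ⟨η, hη, -, hBPB⟩ := h (1 / 2) (by norm_num)
  have hx : ‖toLp 1 ((1 : ℝ) / 2, (1 : ℝ) / 2)‖ = 1 := by
    simp [prod_norm_eq_of_L1]; norm_num
  obtain ⟨S, x₀, ⟨z, hz⟩, hx₀, hS, hSx₀, hST, hxx₀⟩ :=
    hBPB (ContinuousLinearMap.id ℝ _) ContinuousLinearMap.norm_id _ hx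
      (by rw [ContinuousLinearMap.id_apply, hx]; linarith)
  have hinj := S.injective_of_norm_sub_id_lt_one (hST.trans (by norm_num))
  obtain ⟨h₁, h₂⟩ := fst_pos_and_snd_pos_of_norm_sub_lt x₀ hxx₀
  obtain ⟨hSe₁, hSe₂⟩ := norm_apply_basis_eq_one_of_norm_apply_eq_one hS.le hx₀ hSx₀ h₁ h₂
  rcases hz.apply_eq_or_apply_eq_neg (by simp) (hSe₁.trans hS.symm)
    (by simp) (hSe₂.trans hS.symm) with h | h
  · simpa using congrArg WithLp.fst (hinj h)
  · simpa using congrArg WithLp.fst (hinj (h.trans (map_neg S _).symm))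
end

section
/- Let X, Y be Banach spaces and suppose every point of S_X is a strongly exposed point of B_X. If the pair (X, Y) has the Bishop–Phelps–Bollobás property (BPBp), then (X, Y) has the BPBp-ASE; in particular it has the BPBp-RSE. -/
open Filter Topology

/-!
Given a BPBp approximation `S` attaining its norm at `x₀`, pick a norm-one functional `f`
strongly exposing `x₀` (so `f x₀ = 1`) and tilt `S` towards the rank-one operator
`f ⊗ S x₀`: `U = (1 - r) S + r (f ⊗ S x₀)` still has norm one, agrees with `S` at `x₀` and is
`2r`-close to `S`. Since `‖U z‖ ≤ 1 - r + r ‖f z‖` on the unit ball, every maximizing sequence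
of `U` maximizes `‖f‖`; rotating it to make `f` real and positive, strong exposure yields
convergence to `x₀` up to unimodular factors, whose subsequences converge by compactness of
the unit circle of `𝕜`.
-/

section

open RCLike ContinuousLinearMap

variable {𝕜 X Y : Type*} [RCLike 𝕜] [NormedAddCommGroup X] [NormedSpace 𝕜 X]
  [NormedAddCommGroup Y] [NormedSpace 𝕜 Y]

namespace StronglyExposes

variable {f : X →L[𝕜] 𝕜} {x₀ : X}

/-- Rotating `z` by a unimodular scalar turns `‖f z‖` into a value of `re ∘ f`. -/
lemma norm_apply_le (hf : StronglyExposes 𝕜 f x₀) {z : X} (hz : ‖z‖ ≤ 1) :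
    ‖f z‖ ≤ re (f x₀) := by
  obtain ⟨c, hc, hcz⟩ := exists_norm_eq_mul_self (f z)
  have hcz' : ‖c • z‖ ≤ 1 := by rwa [norm_smul, hc, one_mul]
  calc ‖f z‖ = re (f (c • z)) := by rw [map_smul, smul_eq_mul, ← hcz, ofReal_re]
    _ ≤ re (f x₀) := hf.2.1 _ hcz'

lemma apply_eq_norm (hf : StronglyExposes 𝕜 f x₀) : f x₀ = ‖f‖ := by
  have hre : ‖f‖ ≤ re (f x₀) :=
    opNorm_le_of_unit_norm (by simpa using hf.2.1 0 (by simp)) fun z hz ↦ hf.norm_apply_le hz.le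
  have hnorm : ‖f x₀‖ ≤ ‖f‖ := (le_opNorm_of_le f hf.1).trans_eq (mul_one _)
  rw [norm_le_re_iff_eq_norm.1 (hnorm.trans hre), le_antisymm hnorm (hre.trans (re_le_norm _))]

lemma apply_eq_one (hf : StronglyExposes 𝕜 f x₀) (hf₁ : ‖f‖ = 1) : f x₀ = 1 := by
  rw [hf.apply_eq_norm, hf₁, ofReal_one]

lemma ofReal_smul (hf : StronglyExposes 𝕜 f x₀) {c : ℝ} (hc : 0 < c) :
    StronglyExposes 𝕜 ((c : 𝕜) • f) x₀ := by
  have hre : ∀ z, re (((c : 𝕜) • f) z) = c * re (f z) := fun z ↦ re_ofReal_mul c (f z)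
  refine ⟨hf.1, fun z hz ↦ ?_, fun u hu hlim ↦ hf.2.2 u hu ?_⟩
  · simp only [hre]
    exact mul_le_mul_of_nonneg_left (hf.2.1 z hz) hc.le
  · simp only [hre] at hlim
    simpa [hc.ne'] using hlim.const_mul c⁻¹

lemma exists_subseq_tendsto_smul (hf : StronglyExposes 𝕜 f x₀) {u : ℕ → X}
    (hu : ∀ n, ‖u n‖ ≤ 1) (hlim : Tendsto (fun n ↦ ‖f (u n)‖) atTop (𝓝 (re (f x₀)))) :
    ∃ (σ : ℕ → ℕ) (l : 𝕜), StrictMono σ ∧ ‖l‖ = 1 ∧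
      Tendsto (fun n ↦ u (σ n)) atTop (𝓝 (l • x₀)) := by
  choose c hc hcu using fun n ↦ exists_norm_mul_eq_self (f (u n))
  set w : ℕ → X := fun n ↦ (c n)⁻¹ • u n
  have hc0 : ∀ n, c n ≠ 0 := fun n ↦ norm_ne_zero_iff.1 (by rw [hc n]; exact one_ne_zero)
  have hw : ∀ n, ‖w n‖ ≤ 1 := fun n ↦ by simpa [w, norm_smul, hc n] using hu n
  have hfw : ∀ n, re (f (w n)) = ‖f (u n)‖ := fun n ↦ by
    conv_lhs => rw [map_smul, smul_eq_mul, ← hcu n, inv_mul_cancel_left₀ (hc0 n), ofReal_re]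
  have hwx₀ : Tendsto w atTop (𝓝 x₀) := hf.2.2 w hw (by simpa only [hfw] using hlim)
  obtain ⟨l, hl, σ, hσ, hcσ⟩ :=
    (isCompact_sphere (0 : 𝕜) 1).tendsto_subseq (x := c) fun n ↦ by simp [hc n]
  refine ⟨σ, l, hσ, by simpa using hl, ?_⟩
  have huw : ∀ n, u n = c n • w n := fun n ↦ by simp [w, smul_smul, hc0 n]
  exact (hcσ.smul (hwx₀.comp hσ.tendsto_atTop)).congr fun n ↦ (huw (σ n)).symm

end StronglyExposes

lemma StronglyExposedPoint.exists_stronglyExposes_norm_eq_one {x₀ : X}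
    (hx₀ : StronglyExposedPoint 𝕜 x₀) : ∃ f : X →L[𝕜] 𝕜, ‖f‖ = 1 ∧ StronglyExposes 𝕜 f x₀ := by
  obtain ⟨f, hf0, hf⟩ := hx₀
  have hf_pos : 0 < ‖f‖ := norm_pos_iff.2 hf0
  refine ⟨((‖f‖⁻¹ : ℝ) : 𝕜) • f, ?_, hf.ofReal_smul (inv_pos.2 hf_pos)⟩
  rw [norm_smul, norm_of_nonneg (inv_nonneg.2 hf_pos.le), inv_mul_cancel₀ hf_pos.ne']

noncomputable def rankOneTilt (S : X →L[𝕜] Y) (f : X →L[𝕜] 𝕜) (x₀ : X) (r : ℝ) : X →L[𝕜] Y :=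
  ((1 - r : ℝ) : 𝕜) • S + (r : 𝕜) • f.smulRight (S x₀)

section rankOneTilt

variable {S : X →L[𝕜] Y} {f : X →L[𝕜] 𝕜} {x₀ : X} {r : ℝ}

lemma rankOneTilt_apply (z : X) :
    rankOneTilt S f x₀ r z = ((1 - r : ℝ) : 𝕜) • S z + (r : 𝕜) • f z • S x₀ :=
  rfl

lemma rankOneTilt_apply_self (hf : f x₀ = 1) : rankOneTilt S f x₀ r x₀ = S x₀ := by
  rw [rankOneTilt_apply, hf, one_smul, ← add_smul, ofReal_sub, ofReal_one, sub_add_cancel,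
    one_smul]

lemma norm_rankOneTilt_apply_le (hr₀ : 0 ≤ r) (hr₁ : r ≤ 1) (hS : ‖S‖ ≤ 1) (hx₀ : ‖x₀‖ ≤ 1)
    {z : X} (hz : ‖z‖ ≤ 1) : ‖rankOneTilt S f x₀ r z‖ ≤ 1 - r + r * ‖f z‖ := by
  have hSz : ‖S z‖ ≤ 1 := (le_opNorm_of_le S hz).trans (by simpa using hS)
  have hSx₀ : ‖S x₀‖ ≤ 1 := (le_opNorm_of_le S hx₀).trans (by simpa using hS)
  calc ‖rankOneTilt S f x₀ r z‖ ≤ (1 - r) * ‖S z‖ + r * (‖f z‖ * ‖S x₀‖) := by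
        rw [rankOneTilt_apply]
        refine (norm_add_le _ _).trans_eq ?_
        rw [norm_smul, norm_smul, norm_smul, norm_of_nonneg hr₀,
          norm_of_nonneg (sub_nonneg.2 hr₁)]
    _ ≤ (1 - r) * 1 + r * (‖f z‖ * 1) := by gcongr
    _ = 1 - r + r * ‖f z‖ := by ring

lemma norm_rankOneTilt_le_one (hr₀ : 0 ≤ r) (hr₁ : r ≤ 1) (hS : ‖S‖ ≤ 1) (hx₀ : ‖x₀‖ ≤ 1)
    (hf : ‖f‖ ≤ 1) : ‖rankOneTilt S f x₀ r‖ ≤ 1 :=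
  opNorm_le_of_unit_norm zero_le_one fun z hz ↦ by
    have hfz : ‖f z‖ ≤ 1 := (le_opNorm_of_le f hz.le).trans (by simpa using hf)
    nlinarith [norm_rankOneTilt_apply_le (f := f) hr₀ hr₁ hS hx₀ hz.le]

lemma norm_rankOneTilt_sub_le (hr₀ : 0 ≤ r) (hS : ‖S‖ ≤ 1) (hx₀ : ‖x₀‖ ≤ 1) (hf : ‖f‖ ≤ 1) :
    ‖rankOneTilt S f x₀ r - S‖ ≤ 2 * r := by
  have hG : ‖f.smulRight (S x₀)‖ ≤ 1 := by
    rw [norm_smulRight_apply]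
    exact mul_le_one₀ hf (norm_nonneg _) ((le_opNorm_of_le S hx₀).trans (by simpa using hS))
  have hdiff : rankOneTilt S f x₀ r - S = (r : 𝕜) • (f.smulRight (S x₀) - S) := by
    simp only [rankOneTilt, ofReal_sub, ofReal_one]
    module
  rw [hdiff, norm_smul, norm_of_nonneg hr₀, mul_comm]
  gcongr
  linarith [norm_sub_le (f.smulRight (S x₀)) S]

lemma norm_rankOneTilt_eq_one (hr₀ : 0 ≤ r) (hr₁ : r ≤ 1) (hS : ‖S‖ ≤ 1) (hx₀ : ‖x₀‖ ≤ 1)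
    (hf : ‖f‖ ≤ 1) (hfx₀ : f x₀ = 1) (hSx₀ : ‖S x₀‖ = 1) : ‖rankOneTilt S f x₀ r‖ = 1 := by
  refine le_antisymm (norm_rankOneTilt_le_one hr₀ hr₁ hS hx₀ hf) ?_
  calc 1 = ‖rankOneTilt S f x₀ r x₀‖ := by rw [rankOneTilt_apply_self hfx₀, hSx₀]
    _ ≤ ‖rankOneTilt S f x₀ r‖ := (le_opNorm_of_le _ hx₀).trans_eq (mul_one _)

lemma StronglyExposes.aseAt_rankOneTilt (hf : StronglyExposes 𝕜 f x₀) (hf₁ : ‖f‖ = 1)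
    (hx₀ : ‖x₀‖ = 1) (hS : ‖S‖ ≤ 1) (hSx₀ : ‖S x₀‖ = 1) (hr₀ : 0 < r) (hr₁ : r ≤ 1) :
    ASEAt 𝕜 (rankOneTilt S f x₀ r) x₀ := by
  have hfx₀ := hf.apply_eq_one hf₁
  refine ⟨hx₀, fun u hu hlim ↦ hf.exists_subseq_tendsto_smul hu ?_⟩
  rw [norm_rankOneTilt_eq_one hr₀.le hr₁ hS hx₀.le hf₁.le hfx₀ hSx₀] at hlim
  rw [hfx₀, one_re]
  have hlow : Tendsto (fun n ↦ (‖rankOneTilt S f x₀ r (u n)‖ - (1 - r)) / r) atTop (𝓝 1) := by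
    simpa [hr₀.ne'] using (hlim.sub_const (1 - r)).div_const r
  refine tendsto_of_tendsto_of_tendsto_of_le_of_le hlow tendsto_const_nhds (fun n ↦ ?_)
    fun n ↦ (le_opNorm_of_le f (hu n)).trans (by simp [hf₁])
  rw [div_le_iff₀ hr₀]
  linarith [norm_rankOneTilt_apply_le (f := f) hr₀.le hr₁ hS hx₀.le (hu n)]

end rankOneTilt

lemma exists_aseAt_near {S : X →L[𝕜] Y} {x₀ : X} (hx₀ : StronglyExposedPoint 𝕜 x₀)
    (hx₀₁ : ‖x₀‖ = 1) (hS : ‖S‖ ≤ 1) (hSx₀ : ‖S x₀‖ = 1) {δ : ℝ} (hδ : 0 < δ) :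
    ∃ U : X →L[𝕜] Y, ASEAt 𝕜 U x₀ ∧ ‖U‖ = 1 ∧ U x₀ = S x₀ ∧ ‖U - S‖ < δ := by
  obtain ⟨f, hf₁, hf⟩ := hx₀.exists_stronglyExposes_norm_eq_one
  have hfx₀ := hf.apply_eq_one hf₁
  set r := min 1 (δ / 4)
  have hr₀ : 0 < r := lt_min one_pos (by positivity)
  have hr₁ : r ≤ 1 := min_le_left _ _
  refine ⟨rankOneTilt S f x₀ r, hf.aseAt_rankOneTilt hf₁ hx₀₁ hS hSx₀ hr₀ hr₁,
    norm_rankOneTilt_eq_one hr₀.le hr₁ hS hx₀₁.le hf₁.le hfx₀ hSx₀, rankOneTilt_apply_self hfx₀, ?_⟩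
  calc ‖rankOneTilt S f x₀ r - S‖ ≤ 2 * r := norm_rankOneTilt_sub_le hr₀.le hS hx₀₁.le hf₁.le
    _ ≤ 2 * (δ / 4) := by gcongr; exact min_le_right _ _
    _ < δ := by linarith

/-- A maximizing sequence of `S` has a subsequence converging to a rotation of `x₀`, so `x₀`
attains the norm of `S`. -/
lemma ASEAt.norm_apply_eq {S : X →L[𝕜] Y} {x₀ : X} (hS : ASEAt 𝕜 S x₀) : ‖S x₀‖ = ‖S‖ := by
  have hmax : ∀ n : ℕ, ∃ x : X, ‖x‖ < 1 ∧ ‖S‖ - 1 / (n + 1) < ‖S x‖ := fun n ↦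
    S.exists_lt_apply_of_lt_opNorm (sub_lt_self _ Nat.one_div_pos_of_nat)
  choose u hu hSu using hmax
  have hlim : Tendsto (fun n ↦ ‖S (u n)‖) atTop (𝓝 ‖S‖) := by
    refine tendsto_of_tendsto_of_tendsto_of_le_of_le ?_ tendsto_const_nhds (fun n ↦ (hSu n).le)
      fun n ↦ le_opNorm_of_le S (hu n).le |>.trans_eq (mul_one _)
    simpa using (tendsto_const_nhds (x := ‖S‖)).sub tendsto_one_div_add_atTop_nhds_zero_nat
  obtain ⟨σ, l, hσ, hl, hconv⟩ := hS.2 u (fun n ↦ (hu n).le) hlim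
  have hlim' : Tendsto (fun n ↦ ‖S (u (σ n))‖) atTop (𝓝 ‖S (l • x₀)‖) :=
    ((S.continuous.tendsto _).comp hconv).norm
  rw [map_smul, norm_smul, hl, one_mul] at hlim'
  exact tendsto_nhds_unique hlim' (hlim.comp hσ.tendsto_atTop)

lemma ASEAt.rseAt {S : X →L[𝕜] Y} {x₀ : X} (hS : ASEAt 𝕜 S x₀) : RSEAt 𝕜 S x₀ := by
  refine ⟨hS.1, hS.norm_apply_eq, fun u hu hlim ↦ ?_⟩
  obtain ⟨σ, l, hσ, hl, hconv⟩ := hS.2 u hu hlim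
  exact ⟨σ, l, hσ, hl, by simpa [Function.comp_def] using (S.continuous.tendsto _).comp hconv⟩

lemma ASE.rse {S : X →L[𝕜] Y} (hS : ASE 𝕜 S) : RSE 𝕜 S :=
  hS.imp fun _ ↦ ASEAt.rseAt

lemma BPBpASE.bpbpRSE (h : BPBpASE 𝕜 X Y) : BPBpRSE 𝕜 X Y := by
  intro ε hε
  obtain ⟨η, hη, hηε, hT⟩ := h ε hε
  refine ⟨η, hη, hηε, fun T hT₁ x hx hTx ↦ ?_⟩
  obtain ⟨S, x₀, hS, rest⟩ := hT T hT₁ x hx hTx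
  exact ⟨S, x₀, hS.rse, rest⟩

lemma BPBp.bpbpASE (hstr : ∀ x : X, ‖x‖ = 1 → StronglyExposedPoint 𝕜 x) (h : BPBp 𝕜 X Y) :
    BPBpASE 𝕜 X Y := by
  intro ε hε
  obtain ⟨η, hη, hηε, hT⟩ := h (ε / 2) (half_pos hε)
  refine ⟨η, hη, by linarith, fun T hT₁ x hx hTx ↦ ?_⟩
  obtain ⟨S, x₀, hx₀, hS, hSx₀, hST, hxx₀⟩ := hT T hT₁ x hx hTx
  obtain ⟨U, hU, hU₁, hUx₀, hUS⟩ :=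
    exists_aseAt_near (hstr x₀ hx₀) hx₀ hS.le hSx₀ (half_pos hε)
  refine ⟨U, x₀, ⟨x₀, hU⟩, hx₀, hU₁, by rw [hUx₀, hSx₀], ?_, by linarith⟩
  calc ‖U - T‖ ≤ ‖U - S‖ + ‖S - T‖ := norm_sub_le_norm_sub_add_norm_sub _ _ _
    _ < ε := by linarith

end

theorem stmt_12_general {𝕜 X Y : Type*} [RCLike 𝕜] [NormedAddCommGroup X] [NormedSpace 𝕜 X]
    [NormedAddCommGroup Y] [NormedSpace 𝕜 Y]
    (hstr : ∀ x : X, ‖x‖ = 1 → StronglyExposedPoint 𝕜 x)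
    (h : BPBp 𝕜 X Y) : BPBpASE 𝕜 X Y ∧ BPBpRSE 𝕜 X Y :=
  ⟨h.bpbpASE hstr, (h.bpbpASE hstr).bpbpRSE⟩

theorem stmt_12 {𝕜 X Y : Type*} [RCLike 𝕜] [NormedAddCommGroup X] [NormedSpace 𝕜 X]
    [NormedAddCommGroup Y] [NormedSpace 𝕜 Y] [CompleteSpace X] [CompleteSpace Y]
    (hstr : ∀ x : X, ‖x‖ = 1 → StronglyExposedPoint 𝕜 x)
    (h : BPBp 𝕜 X Y) : BPBpASE 𝕜 X Y ∧ BPBpRSE 𝕜 X Y :=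
  stmt_12_general hstr h
end

section
/- Let X be a Banach space such that the identity pair (X, X) has the BPBp-RSE. Then the strongly exposed points of B_X are dense in S_X. -/
open Filter Topology

/-!
Since the pair `(X, X)` has the BPBp-RSE, the identity, which attains its norm at any `x ∈ S_X`,
can be approximated by an RSE operator `S` attaining its norm at a point `x₀` close to `x`.
As `S` is close to the identity it is invertible, and applying `S⁻¹` turns the convergence
`S uₙ → l • S x₁` of the RSE property into `uₙ → l • x₁`, so `S` is ASE. Composing `S` with a
functional norming `S x₀` then strongly exposes `x₀`: a maximizing sequence is a norming sequence
for `S`, hence has subsequences converging to unimodular multiples `c • x₀`, and maximality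
forces `c = 1`.
-/

section Exposing

variable {𝕜 X Y : Type*} [RCLike 𝕜] [NormedAddCommGroup X] [NormedSpace 𝕜 X]
  [NormedAddCommGroup Y] [NormedSpace 𝕜 Y]

theorem RCLike.eq_one_of_norm_eq_one_of_re_eq_one {c : 𝕜} (hc : ‖c‖ = 1)
    (hre : RCLike.re c = 1) : c = 1 := by
  have := RCLike.re_eq_self_of_le (K := 𝕜) (hc.trans hre.symm).le
  rwa [hre, RCLike.ofReal_one, eq_comm] at this

theorem ContinuousLinearMap.exists_leftInverse_of_norm_sub_one_lt_one [CompleteSpace X]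
    {S : X →L[𝕜] X} (hS : ‖S - 1‖ < 1) :
    ∃ R : X →L[𝕜] X, Function.LeftInverse R S := by
  have hunit : IsUnit S := by
    simpa using isUnit_one_sub_of_norm_lt_one (x := 1 - S) (by rwa [norm_sub_rev])
  obtain ⟨R, hRS⟩ := hunit.exists_left_inv
  exact ⟨R, fun z => DFunLike.congr_fun hRS z⟩

theorem RSEAt.aseAt_of_leftInverse {S : X →L[𝕜] Y} {x₀ : X} (hS : RSEAt 𝕜 S x₀)
    {R : Y → X} (hR : Continuous R) (hRS : Function.LeftInverse R S) : ASEAt 𝕜 S x₀ := by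
  obtain ⟨hx₀, -, hconv⟩ := hS
  refine ⟨hx₀, fun u hu hnorm => ?_⟩
  obtain ⟨σ, l, hσ, hl, hlim⟩ := hconv u hu hnorm
  refine ⟨σ, l, hσ, hl, ?_⟩
  simpa only [Function.comp_def, hRS _, ← map_smul] using (hR.tendsto _).comp hlim

theorem ASEAt.of_norm_apply_eq {S : X →L[𝕜] Y} {x₁ x₀ : X} (hS : ASEAt 𝕜 S x₁)
    (hx₀ : ‖x₀‖ = 1) (hSx₀ : ‖S x₀‖ = ‖S‖) : ASEAt 𝕜 S x₀ := by
  obtain ⟨-, hconv⟩ := hS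
  obtain ⟨-, l₀, -, hl₀, hlim₀⟩ :=
    hconv (fun _ => x₀) (fun _ => hx₀.le) (by simpa only [hSx₀] using tendsto_const_nhds)
  have hx₀_eq : x₀ = l₀ • x₁ := tendsto_nhds_unique tendsto_const_nhds hlim₀
  have hl₀_ne : l₀ ≠ 0 := norm_ne_zero_iff.mp (by rw [hl₀]; exact one_ne_zero)
  refine ⟨hx₀, fun u hu hnorm => ?_⟩
  obtain ⟨σ, l, hσ, hl, hlim⟩ := hconv u hu hnorm
  refine ⟨σ, l * l₀⁻¹, hσ, by rw [norm_mul, norm_inv, hl, hl₀, inv_one, mul_one], ?_⟩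
  rwa [hx₀_eq, smul_smul, mul_assoc, inv_mul_cancel₀ hl₀_ne, mul_one]

theorem ASEAt.stronglyExposedPoint {S : X →L[𝕜] Y} {x₀ : X} (hS : ASEAt 𝕜 S x₀)
    (hSx₀ : ‖S x₀‖ = ‖S‖) (hS₀ : S ≠ 0) : StronglyExposedPoint 𝕜 x₀ := by
  obtain ⟨hx₀, hconv⟩ := hS
  have hS_norm : ‖S‖ ≠ 0 := norm_ne_zero_iff.mpr hS₀
  obtain ⟨g, hg, hgSx₀⟩ := exists_dual_vector 𝕜 (S x₀) (hSx₀ ▸ hS_norm)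
  set f : X →L[𝕜] 𝕜 := g.comp S
  have hfx₀ : f x₀ = ‖S‖ := by rw [ContinuousLinearMap.comp_apply, hgSx₀, hSx₀]
  have hfx₀_re : RCLike.re (f x₀) = ‖S‖ := by rw [hfx₀, RCLike.ofReal_re]
  have hre_le_norm : ∀ z, RCLike.re (f z) ≤ ‖S z‖ := fun z =>
    calc RCLike.re (g (S z)) ≤ ‖g (S z)‖ := RCLike.re_le_norm _
      _ ≤ ‖g‖ * ‖S z‖ := g.le_opNorm _
      _ = ‖S z‖ := by rw [hg, one_mul]
  have hnorm_le : ∀ z : X, ‖z‖ ≤ 1 → ‖S z‖ ≤ ‖S‖ := fun z hz =>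
    S.le_opNorm_of_le hz |>.trans_eq (mul_one _)
  refine ⟨f, fun hf => hS_norm ?_, hx₀.le, fun z hz => ?_, fun u hu hmax => ?_⟩
  · simpa [hf] using hfx₀.symm
  · exact hfx₀_re ▸ (hre_le_norm z).trans (hnorm_le z hz)
  rw [hfx₀_re] at hmax
  refine tendsto_of_subseq_tendsto fun ns hns => ?_
  have hmax' := hmax.comp hns
  have hnorming : Tendsto (fun n => ‖S (u (ns n))‖) atTop (𝓝 ‖S‖) :=
    tendsto_of_tendsto_of_tendsto_of_le_of_le hmax' tendsto_const_nhds
      (fun n => hre_le_norm _) (fun n => hnorm_le _ (hu _))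
  obtain ⟨σ, c, hσ, hc, hlim⟩ := hconv (fun n => u (ns n)) (fun n => hu _) hnorming
  -- Testing the limit `c • x₀` against `f` gives `re c * ‖S‖ = ‖S‖`.
  have hre : RCLike.re c = 1 := by
    have hf_lim := ((RCLike.continuous_re.comp f.continuous).tendsto _).comp hlim
    have := tendsto_nhds_unique hf_lim (hmax'.comp hσ.tendsto_atTop)
    rw [Function.comp_apply, map_smul, hfx₀, smul_eq_mul, RCLike.re_mul_ofReal] at this
    exact (mul_eq_right₀ hS_norm).mp this
  rw [RCLike.eq_one_of_norm_eq_one_of_re_eq_one hc hre, one_smul] at hlim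
  exact ⟨σ, hlim⟩

end Exposing

theorem stmt_14 {𝕜 X : Type*} [RCLike 𝕜] [NormedAddCommGroup X] [NormedSpace 𝕜 X]
    [CompleteSpace X] (h : BPBpRSE 𝕜 X X) :
    ∀ x : X, ‖x‖ = 1 → ∀ ε > (0:ℝ),
      ∃ y : X, ‖y‖ = 1 ∧ StronglyExposedPoint 𝕜 y ∧ ‖x - y‖ < ε := by
  intro x hx ε hε
  have : Nontrivial X := ⟨⟨x, 0, ne_zero_of_norm_ne_zero (by rw [hx]; exact one_ne_zero)⟩⟩
  obtain ⟨η, hη, -, happrox⟩ := h (min ε 1) (lt_min hε one_pos)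
  obtain ⟨S, x₀, ⟨x₁, hRSE⟩, hx₀, hS, hSx₀, hS_id, hx_x₀⟩ :=
    happrox (.id 𝕜 X) ContinuousLinearMap.norm_id x hx (by simpa [hx] using hη)
  obtain ⟨R, hRS⟩ := ContinuousLinearMap.exists_leftInverse_of_norm_sub_one_lt_one
    (hS_id.trans_le (min_le_right _ _))
  have hS_attains : ‖S x₀‖ = ‖S‖ := hSx₀.trans hS.symm
  have hASE := (hRSE.aseAt_of_leftInverse R.continuous hRS).of_norm_apply_eq hx₀ hS_attains
  have hS₀ : S ≠ 0 := norm_ne_zero_iff.mp (by rw [hS]; exact one_ne_zero)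
  exact ⟨x₀, hx₀, hASE.stronglyExposedPoint hS_attains hS₀, hx_x₀.trans_le (min_le_left _ _)⟩
end

section
/- Let X, Y be Banach spaces, and suppose the pair (X₁ ⊕₁ X₂, Y) has the BPBp-RSE with function η(ε) for ε ∈ (0,1), where X = X₁ ⊕₁ X₂ is an ℓ₁-sum of two Banach spaces. Then the pair (X₁, Y) has the BPBp-RSE with the same function η. -/
/-!
Extend `T` to `X₁ ⊕₁ X₂` by `T ∘ fst` and apply the property there at `(x, 0)`, obtaining `S̃`
attaining its norm at `z = (a, b)`. Because the norm is additive, `‖S̃ (a, 0)‖ = ‖a‖`, so the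
restriction `S = S̃(·, 0)` attains its norm at `a / ‖a‖`, which is within `‖x - a‖ + ‖b‖` of `x`;
and any sequence along which `S` almost attains its norm does so for `S̃` as well, so `S` inherits
range strong exposure from `S̃`.
-/

open Filter Topology

section RSE

variable {𝕜 X E Y : Type*} [RCLike 𝕜] [NormedAddCommGroup X] [NormedSpace 𝕜 X]
  [NormedAddCommGroup E] [NormedSpace 𝕜 E] [NormedAddCommGroup Y] [NormedSpace 𝕜 Y]

theorem ContinuousLinearMap.opNorm_comp_linearIsometry_le (S : E →L[𝕜] Y) (j : X →ₗᵢ[𝕜] E) :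
    ‖S.comp j.toContinuousLinearMap‖ ≤ ‖S‖ :=
  (S.opNorm_comp_le _).trans <|
    mul_le_of_le_one_right (norm_nonneg S) j.norm_toContinuousLinearMap_le

theorem RSE.rseAt_of_norm_apply_eq {S : X →L[𝕜] Y} (hS : RSE 𝕜 S) {x₀ : X} (hx₀ : ‖x₀‖ = 1)
    (hSx₀ : ‖S x₀‖ = ‖S‖) : RSEAt 𝕜 S x₀ := by
  obtain ⟨w, -, -, hw⟩ := hS
  obtain ⟨-, l₀, -, hl₀, hlim₀⟩ :=
    hw (fun _ => x₀) (fun _ => hx₀.le) (by simpa only [hSx₀] using tendsto_const_nhds)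
  have hSw : S x₀ = l₀ • S w := tendsto_nhds_unique tendsto_const_nhds hlim₀
  have hl₀ne : l₀ ≠ 0 := norm_ne_zero_iff.mp (by rw [hl₀]; exact one_ne_zero)
  refine ⟨hx₀, hSx₀, fun u hu hlim => ?_⟩
  obtain ⟨σ, l, hσ, hl, hlim'⟩ := hw u hu hlim
  refine ⟨σ, l * l₀⁻¹, hσ, by rw [norm_mul, norm_inv, hl, hl₀, inv_one, one_mul], ?_⟩
  rwa [hSw, smul_smul, mul_assoc, inv_mul_cancel₀ hl₀ne, mul_one]

theorem RSE.comp_linearIsometry {S : E →L[𝕜] Y} (hS : RSE 𝕜 S) (j : X →ₗᵢ[𝕜] E) {x₀ : X}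
    (hx₀ : ‖x₀‖ = 1) (hSx₀ : ‖S (j x₀)‖ = ‖S‖) :
    RSEAt 𝕜 (S.comp j.toContinuousLinearMap) x₀ := by
  obtain ⟨-, -, hS'⟩ := hS.rseAt_of_norm_apply_eq (by rwa [j.norm_map]) hSx₀
  have hnorm : ‖S.comp j.toContinuousLinearMap‖ = ‖S‖ := by
    refine le_antisymm ?_ ?_
    · exact S.opNorm_comp_linearIsometry_le j
    · simpa [hSx₀, hx₀] using (S.comp j.toContinuousLinearMap).le_opNorm x₀
  refine ⟨hx₀, by rw [hnorm]; exact hSx₀, fun u hu hlim => ?_⟩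
  rw [hnorm] at hlim
  exact hS' (fun n => j (u n)) (fun n => by rw [j.norm_map]; exact hu n) hlim

end RSE

theorem norm_sub_inv_norm_smul_self {𝕜 X : Type*} [RCLike 𝕜] [NormedAddCommGroup X]
    [NormedSpace 𝕜 X] {a : X} (ha : a ≠ 0) : ‖a - (‖a‖⁻¹ : 𝕜) • a‖ = |‖a‖ - 1| := by
  have hpos : 0 < ‖a‖ := norm_pos_iff.mpr ha
  have : a - (‖a‖⁻¹ : 𝕜) • a = ((1 - ‖a‖⁻¹ : ℝ) : 𝕜) • a := by
    rw [RCLike.ofReal_sub, RCLike.ofReal_one, RCLike.ofReal_inv, sub_smul, one_smul]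
  rw [this, norm_smul, RCLike.norm_ofReal, ← abs_of_pos hpos, ← abs_mul, abs_of_pos hpos,
    sub_mul, one_mul, inv_mul_cancel₀ hpos.ne']

namespace WithLp

variable (p : ENNReal) [Fact (1 ≤ p)] {𝕜 : Type*} [RCLike 𝕜] {X₁ X₂ Y : Type*}
  [NormedAddCommGroup X₁] [NormedSpace 𝕜 X₁] [NormedAddCommGroup X₂] [NormedSpace 𝕜 X₂]
  [NormedAddCommGroup Y] [NormedSpace 𝕜 Y]

variable (𝕜 X₁ X₂) in
def prodInl : X₁ →ₗᵢ[𝕜] WithLp p (X₁ × X₂) where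
  toFun x := toLp p (x, 0)
  map_add' x y := by simp [← toLp_add]
  map_smul' c x := by simp [← toLp_smul]
  norm_map' := norm_toLp_fst p X₁ X₂

@[simp] theorem prodInl_apply (x : X₁) : prodInl p 𝕜 X₁ X₂ x = toLp p (x, 0) := rfl

theorem opNorm_comp_fstL (T : X₁ →L[𝕜] Y) : ‖T.comp (fstL p 𝕜 X₁ X₂)‖ = ‖T‖ := by
  have hfst : ‖fstL p 𝕜 X₁ X₂‖ ≤ 1 :=
    ContinuousLinearMap.opNorm_le_bound _ zero_le_one fun z => by simpa using norm_fst_le X₁ z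
  refine le_antisymm ?_ ?_
  · simpa using (T.opNorm_comp_le _).trans (mul_le_of_le_one_right (norm_nonneg T) hfst)
  · have : T = (T.comp (fstL p 𝕜 X₁ X₂)).comp (prodInl p 𝕜 X₁ X₂).toContinuousLinearMap :=
      ContinuousLinearMap.ext fun _ => rfl
    conv_lhs => rw [this]
    exact ContinuousLinearMap.opNorm_comp_linearIsometry_le _ _

theorem opNorm_comp_prodInl_sub_le (S : WithLp p (X₁ × X₂) →L[𝕜] Y) (T : X₁ →L[𝕜] Y) :
    ‖S.comp (prodInl p 𝕜 X₁ X₂).toContinuousLinearMap - T‖ ≤ ‖S - T.comp (fstL p 𝕜 X₁ X₂)‖ := by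
  have : S.comp (prodInl p 𝕜 X₁ X₂).toContinuousLinearMap - T =
      (S - T.comp (fstL p 𝕜 X₁ X₂)).comp (prodInl p 𝕜 X₁ X₂).toContinuousLinearMap :=
    ContinuousLinearMap.ext fun _ => rfl
  rw [this]
  exact ContinuousLinearMap.opNorm_comp_linearIsometry_le _ _

theorem norm_apply_prodInl_fst {S : WithLp 1 (X₁ × X₂) →L[𝕜] Y} (hS : ‖S‖ ≤ 1)
    {z : WithLp 1 (X₁ × X₂)} (hSz : ‖S z‖ = ‖z‖) :
    ‖S (prodInl 1 𝕜 X₁ X₂ z.fst)‖ = ‖z.fst‖ := by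
  have hS' (w : WithLp 1 (X₁ × X₂)) : ‖S w‖ ≤ ‖w‖ := by
    simpa using S.le_of_opNorm_le hS w
  have hsplit : prodInl 1 𝕜 X₁ X₂ z.fst + toLp 1 (0, z.snd) = z := by
    rw [prodInl_apply, ← toLp_add, Prod.mk_add_mk, add_zero, zero_add]; rfl
  have hsnd := hS' (toLp 1 ((0 : X₁), z.snd))
  rw [norm_toLp_snd] at hsnd
  refine le_antisymm (by simpa using hS' (prodInl 1 𝕜 X₁ X₂ z.fst)) ?_
  have : ‖z.fst‖ + ‖z.snd‖ ≤ ‖S (prodInl 1 𝕜 X₁ X₂ z.fst)‖ + ‖S (toLp 1 (0, z.snd))‖ :=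
    calc ‖z.fst‖ + ‖z.snd‖ = ‖S (prodInl 1 𝕜 X₁ X₂ z.fst + toLp 1 (0, z.snd))‖ := by
          rw [hsplit, hSz, prod_norm_eq_of_L1]
      _ ≤ _ := by rw [map_add]; exact norm_add_le _ _
  linarith

variable (𝕜) in
theorem norm_sub_inv_norm_smul_fst_le {z : WithLp 1 (X₁ × X₂)} (hz : ‖z‖ = 1) (ha : z.fst ≠ 0)
    (x : X₁) : ‖x - (‖z.fst‖⁻¹ : 𝕜) • z.fst‖ ≤ ‖prodInl 1 𝕜 X₁ X₂ x - z‖ := by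
  have hnorm := prod_norm_eq_of_L1 z
  have hfst : ‖z.fst - (‖z.fst‖⁻¹ : 𝕜) • z.fst‖ = ‖z.snd‖ := by
    rw [norm_sub_inv_norm_smul_self ha, abs_of_nonpos (by linarith [norm_nonneg z.snd])]
    linarith
  calc ‖x - (‖z.fst‖⁻¹ : 𝕜) • z.fst‖
      ≤ ‖x - z.fst‖ + ‖z.fst - (‖z.fst‖⁻¹ : 𝕜) • z.fst‖ := norm_sub_le_norm_sub_add_norm_sub _ _ _
    _ = ‖prodInl 1 𝕜 X₁ X₂ x - z‖ := by
      simp [hfst, prod_norm_eq_of_L1]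

end WithLp

theorem stmt_15_general {𝕜 X₁ X₂ Y : Type*} [RCLike 𝕜]
    [NormedAddCommGroup X₁] [NormedSpace 𝕜 X₁]
    [NormedAddCommGroup X₂] [NormedSpace 𝕜 X₂]
    [NormedAddCommGroup Y] [NormedSpace 𝕜 Y]
    (η : ℝ → ℝ) (h : BPBpRSEWith 𝕜 (WithLp 1 (X₁ × X₂)) Y η) :
    BPBpRSEWith 𝕜 X₁ Y η := by
  intro ε hε T hT x hx hTx
  set j := WithLp.prodInl 1 𝕜 X₁ X₂
  obtain ⟨S, z, hS, hz, hSn, hSz, hST, hxz⟩ :=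
    h ε hε (T.comp (WithLp.fstL 1 𝕜 X₁ X₂)) (by rw [WithLp.opNorm_comp_fstL, hT])
      (j x) (by rw [j.norm_map, hx]) hTx
  have hsnd : ‖z.snd‖ < ε := by
    have : (j x - z).snd = -z.snd := by rw [WithLp.sub_snd, sub_eq_neg_self]; rfl
    simpa only [this, norm_neg] using (WithLp.norm_snd_le X₁ (j x - z)).trans_lt hxz
  have hfst : z.fst ≠ 0 := by
    intro h0
    have := WithLp.prod_norm_eq_of_L1 z
    rw [h0, norm_zero, zero_add, hz] at this
    linarith [hε.2]
  set x₀ := (‖z.fst‖⁻¹ : 𝕜) • z.fst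
  have hx₀ : ‖x₀‖ = 1 := norm_smul_inv_norm hfst
  have hSx₀ : ‖S (j x₀)‖ = ‖S‖ := by
    rw [map_smul, map_smul, norm_smul, WithLp.norm_apply_prodInl_fst hSn.le (hSz.trans hz.symm),
      norm_inv, RCLike.norm_ofReal, abs_norm, inv_mul_cancel₀ (norm_ne_zero_iff.mpr hfst), hSn]
  have hrse := hS.comp_linearIsometry j hx₀ hSx₀
  have hSx₀' : ‖S.comp j.toContinuousLinearMap x₀‖ = 1 := hSx₀.trans hSn
  refine ⟨S.comp j.toContinuousLinearMap, x₀, ⟨x₀, hrse⟩, hx₀, ?_, hSx₀', ?_, ?_⟩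
  · exact hrse.2.1.symm.trans hSx₀'
  · exact (WithLp.opNorm_comp_prodInl_sub_le 1 S T).trans_lt hST
  · exact (WithLp.norm_sub_inv_norm_smul_fst_le 𝕜 hz hfst x).trans_lt hxz

theorem stmt_15 {𝕜 X₁ X₂ Y : Type*} [RCLike 𝕜]
    [NormedAddCommGroup X₁] [NormedSpace 𝕜 X₁] [CompleteSpace X₁]
    [NormedAddCommGroup X₂] [NormedSpace 𝕜 X₂] [CompleteSpace X₂]
    [NormedAddCommGroup Y] [NormedSpace 𝕜 Y] [CompleteSpace Y]
    (η : ℝ → ℝ) (h : BPBpRSEWith 𝕜 (WithLp 1 (X₁ × X₂)) Y η) :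
    BPBpRSEWith 𝕜 X₁ Y η :=
  stmt_15_general η h
end

section
/- Let X, Y₁, Y₂ be Banach spaces and Y = Y₁ ⊕∞ Y₂ the ℓ∞-sum. If the pair (X, Y) has the BPBp-RSE with function η(ε) for ε ∈ (0,1), then the pair (X, Y₁) has the BPBp-RSE with the same function η. -/
open Filter Topology

/-!
Embed `T` into `Y₁ ⊕∞ Y₂` as `ι T = (T, 0)` and approximate it by a norm-one range strongly
exposing `A`. The second coordinate of `A` has operator norm at most `‖A - ι T‖ < ε < 1`, so in
the max-norm `‖A v‖ = 1` forces `‖(A v).1‖ = 1` for `‖v‖ ≤ 1`. Hence the first coordinate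
`S = fst ∘ A` attains its norm `1` where `A` does, and since `fst` is a contraction, maximizing
sequences of `S` are maximizing for `A`, whose range convergence `fst` carries over to `S`.
-/

open scoped ENNReal

namespace WithLp

section Lp

variable (p : ℝ≥0∞) [Fact (1 ≤ p)] (𝕜 Y₁ Y₂ : Type*) [NontriviallyNormedField 𝕜]
  [NormedAddCommGroup Y₁] [NormedSpace 𝕜 Y₁] [NormedAddCommGroup Y₂] [NormedSpace 𝕜 Y₂]

def inlₗᵢ : Y₁ →ₗᵢ[𝕜] WithLp p (Y₁ × Y₂) where
  toFun y := toLp p (y, 0)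
  map_add' y y' := by simp [← toLp_add]
  map_smul' c y := by simp [← toLp_smul]
  norm_map' := norm_toLp_fst p Y₁ Y₂

@[simp]
theorem inlₗᵢ_apply (y : Y₁) : inlₗᵢ p 𝕜 Y₁ Y₂ y = toLp p (y, 0) := rfl

theorem norm_fstL_le : ‖fstL p 𝕜 Y₁ Y₂‖ ≤ 1 :=
  ContinuousLinearMap.opNorm_le_bound _ zero_le_one fun z => by simpa using norm_fst_le _ z

theorem norm_sndL_le : ‖sndL p 𝕜 Y₁ Y₂‖ ≤ 1 :=
  ContinuousLinearMap.opNorm_le_bound _ zero_le_one fun z => by simpa using norm_snd_le _ z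

variable {p 𝕜 Y₁ Y₂} {X : Type*} [NormedAddCommGroup X] [NormedSpace 𝕜 X]

theorem norm_fstL_comp_sub_le (A : X →L[𝕜] WithLp p (Y₁ × Y₂)) (T : X →L[𝕜] Y₁) :
    ‖(fstL p 𝕜 Y₁ Y₂).comp A - T‖ ≤ ‖A - (inlₗᵢ p 𝕜 Y₁ Y₂).toContinuousLinearMap.comp T‖ := by
  have : (fstL p 𝕜 Y₁ Y₂).comp A - T =
      (fstL p 𝕜 Y₁ Y₂).comp (A - (inlₗᵢ p 𝕜 Y₁ Y₂).toContinuousLinearMap.comp T) := by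
    ext v; simp
  rw [this]
  exact (ContinuousLinearMap.opNorm_comp_le _ _).trans
    (mul_le_of_le_one_left (norm_nonneg _) (norm_fstL_le p 𝕜 Y₁ Y₂))

theorem norm_sndL_comp_le (A : X →L[𝕜] WithLp p (Y₁ × Y₂)) (T : X →L[𝕜] Y₁) :
    ‖(sndL p 𝕜 Y₁ Y₂).comp A‖ ≤ ‖A - (inlₗᵢ p 𝕜 Y₁ Y₂).toContinuousLinearMap.comp T‖ := by
  have : (sndL p 𝕜 Y₁ Y₂).comp A =
      (sndL p 𝕜 Y₁ Y₂).comp (A - (inlₗᵢ p 𝕜 Y₁ Y₂).toContinuousLinearMap.comp T) := by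
    ext v; simp
  rw [this]
  exact (ContinuousLinearMap.opNorm_comp_le _ _).trans
    (mul_le_of_le_one_left (norm_nonneg _) (norm_sndL_le p 𝕜 Y₁ Y₂))

end Lp

variable {𝕜 X Y₁ Y₂ : Type*} [NontriviallyNormedField 𝕜] [NormedAddCommGroup X] [NormedSpace 𝕜 X]
  [NormedAddCommGroup Y₁] [NormedSpace 𝕜 Y₁] [NormedAddCommGroup Y₂] [NormedSpace 𝕜 Y₂]

theorem norm_fst_apply_eq_of_norm_apply_eq {A : X →L[𝕜] WithLp ∞ (Y₁ × Y₂)} {v : X}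
    (hv : ‖v‖ ≤ 1) (hAv : ‖A v‖ = ‖A‖) (hsnd : ‖(sndL ∞ 𝕜 Y₁ Y₂).comp A‖ < ‖A‖) :
    ‖(A v).fst‖ = ‖A‖ := by
  have hsnd_v : ‖(A v).snd‖ < ‖A‖ :=
    calc ‖(A v).snd‖ = ‖(sndL ∞ 𝕜 Y₁ Y₂).comp A v‖ := rfl
      _ ≤ ‖(sndL ∞ 𝕜 Y₁ Y₂).comp A‖ * ‖v‖ := ContinuousLinearMap.le_opNorm _ _
      _ ≤ ‖(sndL ∞ 𝕜 Y₁ Y₂).comp A‖ := mul_le_of_le_one_right (norm_nonneg _) hv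
      _ < ‖A‖ := hsnd
  rw [prod_norm_eq_sup] at hAv
  rcases max_choice ‖(A v).fst‖ ‖(A v).snd‖ with h | h <;> rw [h] at hAv
  · exact hAv
  · exact absurd hAv hsnd_v.ne

end WithLp

theorem ContinuousLinearMap.opNorm_comp_eq_of_norm_apply_eq {𝕜 X Y Z : Type*}
    [NontriviallyNormedField 𝕜] [NormedAddCommGroup X] [NormedSpace 𝕜 X]
    [NormedAddCommGroup Y] [NormedSpace 𝕜 Y] [NormedAddCommGroup Z] [NormedSpace 𝕜 Z]
    {P : Y →L[𝕜] Z} (hP : ‖P‖ ≤ 1) {A : X →L[𝕜] Y} {x₁ : X} (hx₁ : ‖x₁‖ = 1)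
    (h : ‖P (A x₁)‖ = ‖A‖) : ‖P.comp A‖ = ‖A‖ :=
  le_antisymm ((P.opNorm_comp_le A).trans (mul_le_of_le_one_left (norm_nonneg _) hP))
    (h ▸ (P.comp A).unit_le_opNorm x₁ hx₁.le)

section RangeStronglyExposing

variable {𝕜 X Y Z : Type*} [RCLike 𝕜] [NormedAddCommGroup X] [NormedSpace 𝕜 X]
  [NormedAddCommGroup Y] [NormedSpace 𝕜 Y] [NormedAddCommGroup Z] [NormedSpace 𝕜 Z]

theorem RSEAt.comp_of_norm_apply_eq {P : Y →L[𝕜] Z} (hP : ‖P‖ ≤ 1) {A : X →L[𝕜] Y} {x₁ : X}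
    (hA : RSEAt 𝕜 A x₁) (h : ‖P (A x₁)‖ = ‖A‖) : RSEAt 𝕜 (P.comp A) x₁ := by
  obtain ⟨hx₁, -, hseq⟩ := hA
  have hnorm : ‖P.comp A‖ = ‖A‖ := P.opNorm_comp_eq_of_norm_apply_eq hP hx₁ h
  refine ⟨hx₁, hnorm ▸ h, fun u hu htends => ?_⟩
  have hA_le : ∀ n, ‖A (u n)‖ ≤ ‖A‖ := fun n =>
    (A.le_opNorm (u n)).trans (mul_le_of_le_one_right (norm_nonneg _) (hu n))
  have hP_le : ∀ n, ‖P (A (u n))‖ ≤ ‖A (u n)‖ := fun n =>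
    (P.le_opNorm _).trans (mul_le_of_le_one_left (norm_nonneg _) hP)
  rw [hnorm] at htends
  obtain ⟨σ, l, hσ, hl, hconv⟩ :=
    hseq u hu (tendsto_of_tendsto_of_tendsto_of_le_of_le htends tendsto_const_nhds hP_le hA_le)
  refine ⟨σ, l, hσ, hl, ?_⟩
  simpa [Function.comp_def] using (P.continuous.tendsto _).comp hconv

end RangeStronglyExposing

theorem stmt_16_general {𝕜 X Y₁ Y₂ : Type*} [RCLike 𝕜]
    [NormedAddCommGroup X] [NormedSpace 𝕜 X]
    [NormedAddCommGroup Y₁] [NormedSpace 𝕜 Y₁]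
    [NormedAddCommGroup Y₂] [NormedSpace 𝕜 Y₂]
    (η : ℝ → ℝ) (h : BPBpRSEWith 𝕜 X (WithLp ⊤ (Y₁ × Y₂)) η) :
    BPBpRSEWith 𝕜 X Y₁ η := by
  intro ε hε T hT x hx hTx
  set ι := (WithLp.inlₗᵢ ∞ 𝕜 Y₁ Y₂).toContinuousLinearMap
  obtain ⟨A, x₀, ⟨x₁, hA⟩, hx₀, hA_norm, hAx₀, hAT, hxx₀⟩ :=
    h ε hε (ι.comp T) (by rw [LinearIsometry.norm_toContinuousLinearMap_comp, hT]) x hx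
      (by simpa [ι] using hTx)
  have hsnd : ‖(WithLp.sndL ∞ 𝕜 Y₁ Y₂).comp A‖ < ‖A‖ :=
    hA_norm ▸ (WithLp.norm_sndL_comp_le A T).trans_lt (hAT.trans hε.2)
  have hfst_x₁ := WithLp.norm_fst_apply_eq_of_norm_apply_eq hA.1.le hA.2.1 hsnd
  have hS_norm : ‖(WithLp.fstL ∞ 𝕜 Y₁ Y₂).comp A‖ = 1 :=
    hA_norm ▸ ContinuousLinearMap.opNorm_comp_eq_of_norm_apply_eq
      (WithLp.norm_fstL_le ∞ 𝕜 Y₁ Y₂) hA.1 hfst_x₁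
  refine ⟨(WithLp.fstL ∞ 𝕜 Y₁ Y₂).comp A, x₀,
    ⟨x₁, hA.comp_of_norm_apply_eq (WithLp.norm_fstL_le ∞ 𝕜 Y₁ Y₂) hfst_x₁⟩, hx₀, hS_norm,
    ?_, (WithLp.norm_fstL_comp_sub_le A T).trans_lt hAT, hxx₀⟩
  rw [← hA_norm]
  exact WithLp.norm_fst_apply_eq_of_norm_apply_eq hx₀.le (hAx₀.trans hA_norm.symm) hsnd

theorem stmt_16 {𝕜 X Y₁ Y₂ : Type*} [RCLike 𝕜]
    [NormedAddCommGroup X] [NormedSpace 𝕜 X] [CompleteSpace X]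
    [NormedAddCommGroup Y₁] [NormedSpace 𝕜 Y₁] [CompleteSpace Y₁]
    [NormedAddCommGroup Y₂] [NormedSpace 𝕜 Y₂] [CompleteSpace Y₂]
    (η : ℝ → ℝ) (h : BPBpRSEWith 𝕜 X (WithLp ⊤ (Y₁ × Y₂)) η) :
    BPBpRSEWith 𝕜 X Y₁ η :=
  stmt_16_general η h
end

section
/- Let X be a uniformly smooth Banach space. Then the pair (X, 𝕂) has property [P] (the BPBp for strongly exposing functionals) if and only if the strongly exposed points of B_X are dense in S_X. -/
open Filter Topology

/-!
Property [P] gives, for a unit vector `x` and a norming functional `x'` of it, a strongly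
exposing functional `y'` attaining its norm at a unit vector `y` close to `x`; rotating `y'` by
a unimodular scalar makes it strongly expose `y` itself. Conversely, if `x` is close to a strongly
exposed point `y` and `g` is a norm-one functional strongly exposing `y`, then both `x'` and `g`
almost attain their norm at `x`, so `‖x' + g‖` is close to `2` and uniform convexity of the dual
forces `‖x' - g‖` to be small.
-/

section

open RCLike

variable {𝕜 X : Type*} [RCLike 𝕜] [NormedAddCommGroup X] [NormedSpace 𝕜 X]

variable (𝕜 X) in
/-- Property [P]: the Bishop–Phelps–Bollobás property of `(X, 𝕜)` for strongly exposing
functionals. -/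
def PropertyP : Prop :=
  ∀ ε > (0:ℝ), ∃ η > (0:ℝ), ∀ x' : X →L[𝕜] 𝕜, ‖x'‖ = 1 → ∀ x : X, ‖x‖ = 1 →
    1 - η < re (x' x) →
    ∃ (y' : X →L[𝕜] 𝕜) (y : X), (∃ z : X, StronglyExposes 𝕜 y' z) ∧ ‖y'‖ = 1 ∧
      ‖y‖ = 1 ∧ ‖y' y‖ = 1 ∧ ‖x' - y'‖ < ε ∧ ‖x - y‖ < ε

namespace StronglyExposes

variable {f : X →L[𝕜] 𝕜} {z : X}

theorem re_apply_eq_norm (h : StronglyExposes 𝕜 f z) : re (f z) = ‖f‖ := by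
  obtain ⟨hz, hmax, -⟩ := h
  refine le_antisymm ?_ ?_
  · calc re (f z) ≤ ‖f z‖ := re_le_norm _
      _ ≤ ‖f‖ * ‖z‖ := f.le_opNorm z
      _ ≤ ‖f‖ := mul_le_of_le_one_right (norm_nonneg f) hz
  · refine f.opNorm_le_of_unit_norm (by simpa using hmax 0 (by simp)) fun x hx => ?_
    obtain ⟨c, hc, hfx⟩ := exists_norm_eq_mul_self (f x)
    have hcx : ‖c • x‖ ≤ 1 := by rw [norm_smul, hc, hx, one_mul]
    calc ‖f x‖ = re (f (c • x)) := by rw [map_smul, smul_eq_mul, ← hfx, ofReal_re]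
      _ ≤ re (f z) := hmax _ hcx

theorem norm_apply_eq_norm (h : StronglyExposes 𝕜 f z) : ‖f z‖ = ‖f‖ :=
  le_antisymm ((f.le_opNorm z).trans (mul_le_of_le_one_right (norm_nonneg f) h.1))
    (h.re_apply_eq_norm ▸ re_le_norm _)

theorem eq_of_re_apply_eq (h : StronglyExposes 𝕜 f z) {w : X} (hw : ‖w‖ ≤ 1)
    (hfw : re (f w) = re (f z)) : w = z :=
  tendsto_nhds_unique tendsto_const_nhds
    (h.2.2 (fun _ => w) (fun _ => hw) (hfw ▸ tendsto_const_nhds))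

theorem smul_of_pos (h : StronglyExposes 𝕜 f z) {r : ℝ} (hr : 0 < r) :
    StronglyExposes 𝕜 (r • f) z := by
  obtain ⟨hz, hmax, hseq⟩ := h
  have hre : ∀ w : X, re ((r • f) w) = r * re (f w) := fun w => by
    rw [smul_apply, smul_re]
  refine ⟨hz, fun x hx => ?_, fun u hu hlim => hseq u hu ?_⟩
  · rw [hre, hre]
    exact mul_le_mul_of_nonneg_left (hmax x hx) hr.le
  · simpa only [hre, ← mul_assoc, inv_mul_cancel₀ hr.ne', one_mul] using hlim.const_mul r⁻¹

theorem unit_smul {θ : 𝕜} (hθ : ‖θ‖ = 1) (h : StronglyExposes 𝕜 f (θ • z)) :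
    StronglyExposes 𝕜 (θ • f) z := by
  obtain ⟨hz, hmax, hseq⟩ := h
  have hθθ : (starRingEnd 𝕜 θ) * θ = 1 := by rw [RCLike.conj_mul, hθ]; norm_num
  have happly : ∀ w : X, (θ • f) w = f (θ • w) := fun w => by simp [smul_eq_mul]
  have hnorm : ∀ w : X, ‖θ • w‖ = ‖w‖ := fun w => by rw [norm_smul, hθ, one_mul]
  refine ⟨by rwa [← hnorm], fun x hx => ?_, fun u hu hlim => ?_⟩
  · rw [happly, happly]
    exact hmax _ ((hnorm x).trans_le hx)
  · simp only [happly] at hlim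
    have hθu := (hseq _ (fun n => (hnorm _).trans_le (hu n)) hlim).const_smul (starRingEnd 𝕜 θ)
    simpa only [smul_smul, hθθ, one_smul] using hθu

theorem stronglyExposedPoint_of_norm_apply_eq (h : StronglyExposes 𝕜 f z) (hf : f ≠ 0)
    {y : X} (hy : ‖y‖ ≤ 1) (hfy : ‖f y‖ = ‖f‖) : StronglyExposedPoint 𝕜 y := by
  obtain ⟨c, hc, hfyc⟩ := exists_norm_eq_mul_self (f y)
  have hcy : c • y = z := by
    refine h.eq_of_re_apply_eq (by rwa [norm_smul, hc, one_mul]) ?_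
    rw [h.re_apply_eq_norm, map_smul, smul_eq_mul, ← hfyc, ofReal_re, hfy]
  refine ⟨c • f, smul_ne_zero (norm_ne_zero_iff.1 (hc ▸ one_ne_zero)) hf, unit_smul hc ?_⟩
  rwa [hcy]

end StronglyExposes

theorem StronglyExposedPoint.exists_norm_eq_one {y : X} (hy : StronglyExposedPoint 𝕜 y) :
    ∃ g : X →L[𝕜] 𝕜, ‖g‖ = 1 ∧ StronglyExposes 𝕜 g y := by
  obtain ⟨f, hf, hfy⟩ := hy
  have hfn : 0 < ‖f‖ := norm_pos_iff.2 hf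
  refine ⟨‖f‖⁻¹ • f, ?_, hfy.smul_of_pos (inv_pos.2 hfn)⟩
  rw [norm_smul, norm_inv, norm_norm, inv_mul_cancel₀ hfn.ne']

theorem ContinuousLinearMap.re_apply_le_re_apply_add (g : X →L[𝕜] 𝕜) (x y : X) :
    re (g y) ≤ re (g x) + ‖g‖ * ‖x - y‖ := by
  have hgxy : re (g y) = re (g x) + re (g (y - x)) := by rw [map_sub, map_sub]; ring
  have hbound : re (g (y - x)) ≤ ‖g‖ * ‖x - y‖ :=
    norm_sub_rev x y ▸ (re_le_norm _).trans (g.le_opNorm _)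
  linarith

theorem exists_pos_norm_sub_lt_of_re_apply_gt [UniformConvexSpace (X →L[𝕜] 𝕜)] {ε : ℝ}
    (hε : 0 < ε) :
    ∃ η > (0:ℝ), ∀ f g : X →L[𝕜] 𝕜, ‖f‖ = 1 → ‖g‖ = 1 → ∀ x : X, ‖x‖ ≤ 1 →
      1 - η < re (f x) → 1 - η < re (g x) → ‖f - g‖ < ε := by
  obtain ⟨δ, hδ, hconvex⟩ := exists_forall_sphere_dist_add_le_two_sub (X →L[𝕜] 𝕜) hε
  refine ⟨δ / 2, by positivity, fun f g hf hg x hx hfx hgx => ?_⟩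
  have hsum : 2 - δ < ‖f + g‖ :=
    calc 2 - δ < re ((f + g) x) := by
          rw [add_apply, map_add]; linarith
      _ ≤ ‖(f + g) x‖ := re_le_norm _
      _ ≤ ‖f + g‖ := (f + g).le_of_opNorm_le_of_le le_rfl hx |>.trans_eq (mul_one _)
  by_contra! hfar
  linarith [hconvex hf hg hfar]

theorem exists_stronglyExposedPoint_of_propertyP (hP : PropertyP 𝕜 X) (x : X) (hx : ‖x‖ = 1)
    {ε : ℝ} (hε : 0 < ε) : ∃ y : X, ‖y‖ = 1 ∧ StronglyExposedPoint 𝕜 y ∧ ‖x - y‖ < ε := by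
  obtain ⟨η, hη, hPη⟩ := hP ε hε
  obtain ⟨x', hx'1, hx'x⟩ := exists_dual_vector 𝕜 x (by rw [hx]; exact one_ne_zero)
  have hre : 1 - η < re (x' x) := by rw [hx'x, hx, ofReal_re]; linarith
  obtain ⟨y', y, ⟨z, hz⟩, hy'1, hy1, hy'y, -, hxy⟩ := hPη x' hx'1 x hx hre
  refine ⟨y, hy1, hz.stronglyExposedPoint_of_norm_apply_eq ?_ hy1.le (hy'y.trans hy'1.symm), hxy⟩
  rintro rfl
  simp at hy'1

theorem propertyP_of_exists_stronglyExposedPoint [UniformConvexSpace (X →L[𝕜] 𝕜)]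
    (hdense : ∀ x : X, ‖x‖ = 1 → ∀ ε > (0:ℝ),
      ∃ y : X, ‖y‖ = 1 ∧ StronglyExposedPoint 𝕜 y ∧ ‖x - y‖ < ε) :
    PropertyP 𝕜 X := by
  intro ε hε
  obtain ⟨η, hη, hclose⟩ := exists_pos_norm_sub_lt_of_re_apply_gt (𝕜 := 𝕜) (X := X) hε
  refine ⟨η, hη, fun x' hx' x hx hx'x => ?_⟩
  obtain ⟨y, hy1, hy, hxy⟩ := hdense x hx (min η ε) (lt_min hη hε)
  obtain ⟨g, hg1, hgy⟩ := hy.exists_norm_eq_one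
  have hgx : 1 - η < re (g x) := by
    have := g.re_apply_le_re_apply_add x y
    rw [hgy.re_apply_eq_norm, hg1, one_mul] at this
    linarith [min_le_left η ε]
  exact ⟨g, y, ⟨y, hgy⟩, hg1, hy1, hgy.norm_apply_eq_norm.trans hg1,
    hclose x' g hx' hg1 x hx.le hx'x hgx, hxy.trans_le (min_le_right η ε)⟩

end

theorem stmt_19_general {𝕜 X : Type*} [RCLike 𝕜] [NormedAddCommGroup X] [NormedSpace 𝕜 X]
    [UniformConvexSpace (X →L[𝕜] 𝕜)] :
    (∀ ε > (0:ℝ), ∃ η > (0:ℝ), ∀ x' : X →L[𝕜] 𝕜, ‖x'‖ = 1 → ∀ x : X, ‖x‖ = 1 →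
      1 - η < RCLike.re (x' x) →
      ∃ (y' : X →L[𝕜] 𝕜) (y : X), (∃ z : X, StronglyExposes 𝕜 y' z) ∧ ‖y'‖ = 1 ∧
        ‖y‖ = 1 ∧ ‖y' y‖ = 1 ∧ ‖x' - y'‖ < ε ∧ ‖x - y‖ < ε)
    ↔ (∀ x : X, ‖x‖ = 1 → ∀ ε > (0:ℝ),
        ∃ y : X, ‖y‖ = 1 ∧ StronglyExposedPoint 𝕜 y ∧ ‖x - y‖ < ε) :=
  ⟨fun hP x hx _ hε => exists_stronglyExposedPoint_of_propertyP hP x hx hε,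
    propertyP_of_exists_stronglyExposedPoint⟩

theorem stmt_19 {𝕜 X : Type*} [RCLike 𝕜] [NormedAddCommGroup X] [NormedSpace 𝕜 X]
    [CompleteSpace X] [UniformConvexSpace (X →L[𝕜] 𝕜)] :
    (∀ ε > (0:ℝ), ∃ η > (0:ℝ), ∀ x' : X →L[𝕜] 𝕜, ‖x'‖ = 1 → ∀ x : X, ‖x‖ = 1 →
      1 - η < RCLike.re (x' x) →
      ∃ (y' : X →L[𝕜] 𝕜) (y : X), (∃ z : X, StronglyExposes 𝕜 y' z) ∧ ‖y'‖ = 1 ∧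
        ‖y‖ = 1 ∧ ‖y' y‖ = 1 ∧ ‖x' - y'‖ < ε ∧ ‖x - y‖ < ε)
    ↔ (∀ x : X, ‖x‖ = 1 → ∀ ε > (0:ℝ),
        ∃ y : X, ‖y‖ = 1 ∧ StronglyExposedPoint 𝕜 y ∧ ‖x - y‖ < ε) :=
  stmt_19_general
end
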